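/- arXiv:2109.02559 — 11 statements merged into one kernel-verified Lean document; each statement's English description precedes it below -/
import Mathlib

section
/- For any operator T admitting an A-adjoint, the generalized A-numerical radius satisfies ω_{N_A}(T) ≥ N_A(T)/2 + |N_A(Re_A(T)) − N_A(Im_A(T))|/2. -/
noncomputable section

open ContinuousLinearMap

variable {H : Type*} [NormedAddCommGroup H] [InnerProductSpace ℂ H] [CompleteSpace H]

/-- `Ts` is the distinguished `A`-adjoint `T^{♯_A}` of `T`:
the unique solution of `A X = T* A` whose range lies in the closure of the range of `A`. -/
def IsSharp (A T Ts : H →L[ℂ] H) : Prop :=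
  A ∘L Ts = adjoint T ∘L A ∧ ∀ x, Ts x ∈ closure (Set.range A)

/-- Membership in `B_A(H)`: admitting an `A`-adjoint. -/
def MemBA (A T : H →L[ℂ] H) : Prop := ∃ Ts, IsSharp A T Ts

/-- The seminorm `‖x‖_A = √⟨Ax,x⟩`. -/
def aNorm (A : H →L[ℂ] H) (x : H) : ℝ := Real.sqrt ((inner ℂ (A x) x : ℂ).re)

/-- Membership in `B_{A^{1/2}}(H)`: `A`-bounded operators. -/
def MemBAhalf (A T : H →L[ℂ] H) : Prop :=
  ∃ c : ℝ, 0 < c ∧ ∀ x, aNorm A (T x) ≤ c * aNorm A x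

/-- `Re_A(T) = (T + T^{♯_A})/2`, where `Ts` stands for `T^{♯_A}`. -/
def ReA (T Ts : H →L[ℂ] H) : H →L[ℂ] H := (2 : ℂ)⁻¹ • (T + Ts)

/-- `Im_A(T) = (T - T^{♯_A})/(2i)`, where `Ts` stands for `T^{♯_A}`. -/
def ImA (T Ts : H →L[ℂ] H) : H →L[ℂ] H := (2 * Complex.I)⁻¹ • (T - Ts)

/-- The generalized `A`-numerical radius
`ω_{N_A}(T) = sup_θ N_A(Re_A(e^{iθ}T))`, where `Ts` stands for `T^{♯_A}`. -/
def wNA (N : Seminorm ℂ (H →L[ℂ] H)) (T Ts : H →L[ℂ] H) : ℝ :=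
  ⨆ θ : ℝ, N (ReA (Complex.exp ((θ : ℂ) * Complex.I) • T)
      (Complex.exp (-((θ : ℂ) * Complex.I)) • Ts))

/-- `N_A` is `A`-selfadjoint invariant. -/
def SelfadjInv (A : H →L[ℂ] H) (N : Seminorm ℂ (H →L[ℂ] H)) : Prop :=
  ∀ T Ts, IsSharp A T Ts → N T = N Ts

/-- `N_A` is submultiplicative. -/
def Submult (A : H →L[ℂ] H) (N : Seminorm ℂ (H →L[ℂ] H)) : Prop :=
  ∀ T S, MemBAhalf A T → MemBAhalf A S → N (T ∘L S) ≤ N T * N S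

/-- `N_A` is `A`-increasing. -/
def AIncreasing (A : H →L[ℂ] H) (N : Seminorm ℂ (H →L[ℂ] H)) : Prop :=
  ∀ S T : H →L[ℂ] H, IsSelfAdjoint (A ∘L S) → IsSelfAdjoint (A ∘L T) →
    (A ∘L (T - S)).IsPositive → N S ≤ N T

/-- `N_A` satisfies the `A`-power property. -/
def APower (A : H →L[ℂ] H) (N : Seminorm ℂ (H →L[ℂ] H)) : Prop :=
  ∀ T : H →L[ℂ] H, IsSelfAdjoint (A ∘L T) → ∀ n : ℕ, 0 < n → N (T ^ n) = N T ^ n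

/-- `U` is `A`-unitary with `A`-adjoint `Us`. -/
def AUnitary (A U Us : H →L[ℂ] H) : Prop :=
  IsSharp A U Us ∧ ∀ x, aNorm A (U x) = aNorm A x ∧ aNorm A (Us x) = aNorm A x

/-- `N_A` is `A`-weakly unitarily invariant. -/
def WeakUnitInv (A : H →L[ℂ] H) (N : Seminorm ℂ (H →L[ℂ] H)) : Prop :=
  ∀ T U Us, MemBAhalf A T → AUnitary A U Us → N (Us ∘L T ∘L U) = N T

/-- semi-inner product `⟨x,y⟩_A = ⟨Ax, y⟩`. -/
def aInner (A : H →L[ℂ] H) (x y : H) : ℂ := inner ℂ (A x) y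

/-- `A`-operator seminorm `‖T‖_A = sup{|⟨Tx,y⟩_A| : ‖x‖_A = ‖y‖_A = 1}`. -/
def opANorm (A T : H →L[ℂ] H) : ℝ :=
  sSup {r : ℝ | ∃ x y, aNorm A x = 1 ∧ aNorm A y = 1 ∧ r = ‖aInner A (T x) y‖}

/-- `A`-numerical radius `ω_A(T) = sup{|⟨Tx,x⟩_A| : ‖x‖_A = 1}`. -/
def wA (A T : H →L[ℂ] H) : ℝ :=
  sSup {r : ℝ | ∃ x, aNorm A x = 1 ∧ r = ‖aInner A (T x) x‖}

/-- `Ω_A(T) = sup{‖αT + βT^{♯_A}‖_A : |α|² + |β|² ≤ 1}`, with `Ts` standing for `T^{♯_A}`. -/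
def OmegaA (A T Ts : H →L[ℂ] H) : ℝ :=
  sSup {r : ℝ | ∃ α β : ℂ, ‖α‖ ^ 2 + ‖β‖ ^ 2 ≤ 1 ∧ r = opANorm A (α • T + β • Ts)}

theorem stmt0 (A : H →L[ℂ] H) (hA : A ≠ 0) (hApos : A.IsPositive)
    (N : Seminorm ℂ (H →L[ℂ] H)) (T Ts : H →L[ℂ] H) (hTs : IsSharp A T Ts) :
    wNA N T Ts ≥ N T / 2 + |(N (ReA T Ts) : ℝ) - N (ImA T Ts)| / 2 := by
  have key : ∀ θ : ℝ, N (ReA (Complex.exp ((θ : ℂ) * Complex.I) • T)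
      (Complex.exp (-((θ : ℂ) * Complex.I)) • Ts)) ≤ wNA N T Ts := by
    intro θ
    apply le_ciSup (f := fun θ : ℝ => N (ReA (Complex.exp ((θ : ℂ) * Complex.I) • T)
      (Complex.exp (-((θ : ℂ) * Complex.I)) • Ts)))
    refine ⟨N T + N Ts, ?_⟩
    rintro r ⟨φ, rfl⟩
    have h1 : ‖Complex.exp ((φ : ℂ) * Complex.I)‖ = 1 := by
      rw [Complex.norm_exp]; simp
    have h2 : ‖Complex.exp (-((φ : ℂ) * Complex.I))‖ = 1 := by
      rw [Complex.norm_exp]; simp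
    simp only [ReA]
    calc N ((2 : ℂ)⁻¹ • (Complex.exp ((φ : ℂ) * Complex.I) • T
          + Complex.exp (-((φ : ℂ) * Complex.I)) • Ts))
        = ‖(2 : ℂ)⁻¹‖ * N (Complex.exp ((φ : ℂ) * Complex.I) • T
          + Complex.exp (-((φ : ℂ) * Complex.I)) • Ts) := map_smul_eq_mul N _ _
      _ ≤ ‖(2 : ℂ)⁻¹‖ * (N (Complex.exp ((φ : ℂ) * Complex.I) • T)
          + N (Complex.exp (-((φ : ℂ) * Complex.I)) • Ts)) := by
          apply mul_le_mul_of_nonneg_left (map_add_le_add N _ _) (norm_nonneg _)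
      _ = (1/2) * (N T + N Ts) := by
          rw [map_smul_eq_mul, map_smul_eq_mul, h1, h2]; norm_num
      _ ≤ N T + N Ts := by
          have := apply_nonneg N T; have := apply_nonneg N Ts; linarith
  have h0 : (N (ReA T Ts) : ℝ) ≤ wNA N T Ts := by
    have := key 0
    simpa using this
  have hexp1 : Complex.exp (((Real.pi/2 : ℝ) : ℂ) * Complex.I) = Complex.I := by
    rw [Complex.exp_mul_I, ← Complex.ofReal_cos, ← Complex.ofReal_sin]
    simp
  have hexp2 : Complex.exp (-(((Real.pi/2 : ℝ) : ℂ) * Complex.I)) = -Complex.I := by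
    rw [← neg_mul, Complex.exp_mul_I, ← Complex.ofReal_neg, ← Complex.ofReal_cos,
      ← Complex.ofReal_sin]
    simp
  have hop : ReA (Complex.I • T) ((-Complex.I) • Ts) = -(ImA T Ts) := by
    simp only [ReA, ImA]
    have h : (2 * Complex.I)⁻¹ = -(2⁻¹ * Complex.I) := by
      rw [mul_inv, Complex.inv_I, mul_neg]
    rw [h]
    module
  have h1 : (N (ImA T Ts) : ℝ) ≤ wNA N T Ts := by
    have := key (Real.pi/2)
    rw [hexp1, hexp2, hop, map_neg_eq_map] at this
    exact this
  have hT : (N T : ℝ) ≤ N (ReA T Ts) + N (ImA T Ts) := by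
    have hsum : ReA T Ts + Complex.I • ImA T Ts = T := by
      simp only [ReA, ImA]
      have h : (2 * Complex.I)⁻¹ = -(2⁻¹ * Complex.I) := by
        rw [mul_inv, Complex.inv_I, mul_neg]
      rw [h]
      have hI : Complex.I * Complex.I = -1 := Complex.I_mul_I
      match_scalars <;> field_simp <;> rw [Complex.I_sq] <;> norm_num
    calc (N T : ℝ) = N (ReA T Ts + Complex.I • ImA T Ts) := by rw [hsum]
      _ ≤ N (ReA T Ts) + N (Complex.I • ImA T Ts) := map_add_le_add N _ _
      _ = N (ReA T Ts) + N (ImA T Ts) := by rw [map_smul_eq_mul]; simp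
  rcases abs_cases ((N (ReA T Ts) : ℝ) - N (ImA T Ts)) with ⟨habs, _⟩ | ⟨habs, _⟩ <;>
    rw [habs] <;> linarith
end
end

section
/- For T admitting an A-adjoint, ω_{N_A}(T) = N_A(T)/2 if and only if N_A(Re_A(e^{iθ}T)) = N_A(Im_A(e^{iθ}T)) = N_A(T)/2 for all θ ∈ ℝ. -/
noncomputable section

open ContinuousLinearMap

variable {H : Type*} [NormedAddCommGroup H] [InnerProductSpace ℂ H] [CompleteSpace H]

lemma h2I : (2 * Complex.I)⁻¹ = -Complex.I/2 := by
  rw [mul_inv, Complex.inv_I]; ring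

lemma re_add_I_im (X Y : H →L[ℂ] H) : ReA X Y + Complex.I • ImA X Y = X := by
  rw [ReA, ImA, h2I, smul_smul]
  have h : Complex.I * (-Complex.I/2) = (2:ℂ)⁻¹ := by
    simp [Complex.ext_iff]; norm_num
  rw [h]; module

lemma re_neg_I (c d : ℂ) (T Ts : H →L[ℂ] H) :
    ReA ((c * -Complex.I) • T) ((d * Complex.I) • Ts) = ImA (c • T) (d • Ts) := by
  rw [ReA, ImA, h2I]
  module

lemma exp_shift1 (θ : ℝ) :
    Complex.exp (((θ - Real.pi/2 : ℝ) : ℂ) * Complex.I)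
      = Complex.exp ((θ:ℂ) * Complex.I) * -Complex.I := by
  push_cast
  rw [sub_mul, Complex.exp_sub]
  have : Complex.exp (((Real.pi:ℂ)/2) * Complex.I) = Complex.I := by
    rw [Complex.exp_mul_I]
    simp [Complex.cos_pi_div_two, Complex.sin_pi_div_two]
  rw [this, Complex.div_I]; ring

lemma exp_shift2 (θ : ℝ) :
    Complex.exp (-(((θ - Real.pi/2 : ℝ) : ℂ) * Complex.I))
      = Complex.exp (-((θ:ℂ) * Complex.I)) * Complex.I := by
  push_cast
  rw [show (-((((θ:ℂ)) - (Real.pi:ℂ)/2) * Complex.I)) =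
      -((θ:ℂ)*Complex.I) + ((Real.pi:ℂ)/2)*Complex.I by ring, Complex.exp_add]
  have : Complex.exp (((Real.pi:ℂ)/2) * Complex.I) = Complex.I := by
    rw [Complex.exp_mul_I]
    simp [Complex.cos_pi_div_two, Complex.sin_pi_div_two]
  rw [this]

theorem stmt1 (A : H →L[ℂ] H) (hA : A ≠ 0) (hApos : A.IsPositive)
    (N : Seminorm ℂ (H →L[ℂ] H)) (T Ts : H →L[ℂ] H) (hTs : IsSharp A T Ts) :
    wNA N T Ts = N T / 2 ↔
      ∀ θ : ℝ,
        N (ReA (Complex.exp ((θ : ℂ) * Complex.I) • T)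
            (Complex.exp (-((θ : ℂ) * Complex.I)) • Ts)) = N T / 2 ∧
        N (ImA (Complex.exp ((θ : ℂ) * Complex.I) • T)
            (Complex.exp (-((θ : ℂ) * Complex.I)) • Ts)) = N T / 2 := by
  have hnorm : ∀ z : ℂ, ‖z‖ = 1 → ∀ S : H →L[ℂ] H, N (z • S) = N S := by
    intro z hz S
    rw [map_smul_eq_mul, hz, one_mul]
  have e1 : ∀ θ : ℝ, ‖Complex.exp ((θ:ℂ) * Complex.I)‖ = 1 :=
    fun θ => Complex.norm_exp_ofReal_mul_I θ
  have e2 : ∀ θ : ℝ, ‖Complex.exp (-((θ:ℂ) * Complex.I))‖ = 1 := by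
    intro θ
    have := Complex.norm_exp_ofReal_mul_I (-θ)
    push_cast at this
    rw [← this]; ring_nf
  set f : ℝ → ℝ := fun θ => N (ReA (Complex.exp ((θ:ℂ) * Complex.I) • T)
      (Complex.exp (-((θ:ℂ) * Complex.I)) • Ts)) with hf
  have hwna : wNA N T Ts = ⨆ θ, f θ := rfl
  have hsum : ∀ θ : ℝ, (N T : ℝ) ≤ f θ +
      N (ImA (Complex.exp ((θ:ℂ) * Complex.I) • T)
        (Complex.exp (-((θ:ℂ) * Complex.I)) • Ts)) := by
    intro θ
    set X := Complex.exp ((θ:ℂ) * Complex.I) • T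
    set Y := Complex.exp (-((θ:ℂ) * Complex.I)) • Ts
    calc (N T : ℝ) = N X := (hnorm _ (e1 θ) T).symm
      _ = N (ReA X Y + Complex.I • ImA X Y) := by rw [re_add_I_im]
      _ ≤ N (ReA X Y) + N (Complex.I • ImA X Y) := map_add_le_add N _ _
      _ = f θ + N (ImA X Y) := by rw [hnorm Complex.I (by simp) (ImA X Y)]
  have him : ∀ θ : ℝ, N (ImA (Complex.exp ((θ:ℂ) * Complex.I) • T)
      (Complex.exp (-((θ:ℂ) * Complex.I)) • Ts)) = f (θ - Real.pi/2) := by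
    intro θ
    have := re_neg_I (Complex.exp ((θ:ℂ) * Complex.I))
      (Complex.exp (-((θ:ℂ) * Complex.I))) T Ts
    rw [hf]
    simp only
    rw [exp_shift1, exp_shift2, this]
  have hbdd : BddAbove (Set.range f) := by
    refine ⟨(N T + N Ts) / 2, ?_⟩
    rintro r ⟨θ, rfl⟩
    have : f θ ≤ 2⁻¹ * (N T + N Ts) := by
      rw [hf]; simp only [ReA]
      calc (N ((2:ℂ)⁻¹ • (Complex.exp ((θ:ℂ) * Complex.I) • T +
            Complex.exp (-((θ:ℂ) * Complex.I)) • Ts)) : ℝ)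
          = ‖(2:ℂ)⁻¹‖ * N (Complex.exp ((θ:ℂ) * Complex.I) • T +
            Complex.exp (-((θ:ℂ) * Complex.I)) • Ts) := map_smul_eq_mul N _ _
        _ ≤ 2⁻¹ * (N (Complex.exp ((θ:ℂ) * Complex.I) • T) +
            N (Complex.exp (-((θ:ℂ) * Complex.I)) • Ts)) := by
            rw [show ‖(2:ℂ)⁻¹‖ = (2:ℝ)⁻¹ by norm_num]
            exact mul_le_mul_of_nonneg_left (map_add_le_add N _ _) (by norm_num)
        _ = 2⁻¹ * (N T + N Ts) := by rw [hnorm _ (e1 θ), hnorm _ (e2 θ)]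
    linarith
  constructor
  · intro hw θ
    have hle1 : f θ ≤ N T / 2 := by
      rw [← hw, hwna]; exact le_ciSup hbdd θ
    have hle2 : N (ImA (Complex.exp ((θ:ℂ) * Complex.I) • T)
        (Complex.exp (-((θ:ℂ) * Complex.I)) • Ts)) ≤ N T / 2 := by
      rw [him θ, ← hw, hwna]; exact le_ciSup hbdd (θ - Real.pi/2)
    have := hsum θ
    constructor <;> linarith
  · intro h
    rw [hwna]
    have : f = fun _ => (N T : ℝ) / 2 := funext fun θ => (h θ).1
    rw [this, ciSup_const]
end
end

section
/- For T admitting an A-adjoint, N_A(T)/2 ≤ ω_{N_A}(T); moreover, if N_A is A-selfadjoint invariant, then ω_{N_A}(T) ≤ N_A(T). -/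
noncomputable section

open ContinuousLinearMap

variable {H : Type*} [NormedAddCommGroup H] [InnerProductSpace ℂ H] [CompleteSpace H]

theorem stmt4 (A : H →L[ℂ] H) (hA : A ≠ 0) (hApos : A.IsPositive)
    (N : Seminorm ℂ (H →L[ℂ] H)) (T Ts : H →L[ℂ] H) (hTs : IsSharp A T Ts) :
    N T / 2 ≤ wNA N T Ts ∧ (SelfadjInv A N → wNA N T Ts ≤ N T) := by
  set f : ℝ → ℝ := fun θ => N (ReA (Complex.exp ((θ : ℂ) * Complex.I) • T)
      (Complex.exp (-((θ : ℂ) * Complex.I)) • Ts)) with hf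
  have hW : wNA N T Ts = ⨆ θ : ℝ, f θ := rfl
  have hval : ∀ θ : ℝ, f θ = (1/2) * N (Complex.exp ((θ : ℂ) * Complex.I) • T
      + Complex.exp (-((θ : ℂ) * Complex.I)) • Ts) := by
    intro θ
    simp only [hf, ReA]
    rw [map_smul_eq_mul]
    norm_num
  have hbound : ∀ θ : ℝ, f θ ≤ (N T + N Ts) / 2 := by
    intro θ
    rw [hval θ]
    have h1 : N (Complex.exp ((θ : ℂ) * Complex.I) • T
        + Complex.exp (-((θ : ℂ) * Complex.I)) • Ts)
        ≤ N (Complex.exp ((θ : ℂ) * Complex.I) • T)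
          + N (Complex.exp (-((θ : ℂ) * Complex.I)) • Ts) := map_add_le_add N _ _
    have e1 : ‖Complex.exp ((θ : ℂ) * Complex.I)‖ = 1 := Complex.norm_exp_ofReal_mul_I θ
    have e2 : ‖Complex.exp (-((θ : ℂ) * Complex.I))‖ = 1 := by
      rw [show -((θ : ℂ) * Complex.I) = ((-θ : ℝ) : ℂ) * Complex.I by push_cast; ring]
      exact Complex.norm_exp_ofReal_mul_I (-θ)
    rw [map_smul_eq_mul, map_smul_eq_mul, e1, e2] at h1
    linarith
  have hbdd : BddAbove (Set.range f) := by
    refine ⟨(N T + N Ts) / 2, ?_⟩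
    rintro r ⟨θ, rfl⟩
    exact hbound θ
  constructor
  · have h0 : N ((2 : ℂ)⁻¹ • (T + Ts)) ≤ wNA N T Ts := by
      have h := le_ciSup hbdd (0 : ℝ)
      rw [← hW] at h
      have : f 0 = N ((2 : ℂ)⁻¹ • (T + Ts)) := by
        simp [hf, ReA]
      linarith [this ▸ h]
    have h1 : N ((2 : ℂ)⁻¹ • (T - Ts)) ≤ wNA N T Ts := by
      have h := le_ciSup hbdd (Real.pi / 2 : ℝ)
      rw [← hW] at h
      have hexp : Complex.exp (((Real.pi / 2 : ℝ) : ℂ) * Complex.I) = Complex.I := by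
        rw [Complex.exp_mul_I, ← Complex.ofReal_cos, ← Complex.ofReal_sin,
          Real.cos_pi_div_two, Real.sin_pi_div_two]
        simp
      have hexp' : Complex.exp (-(((Real.pi / 2 : ℝ) : ℂ) * Complex.I)) = -Complex.I := by
        rw [Complex.exp_neg, hexp, Complex.inv_I]
      have hfval : f (Real.pi / 2) = N ((2 : ℂ)⁻¹ • (T - Ts)) := by
        simp only [hf, ReA, hexp, hexp']
        have heq : (2 : ℂ)⁻¹ • (Complex.I • T + (-Complex.I) • Ts)
            = Complex.I • ((2 : ℂ)⁻¹ • (T - Ts)) := by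
          module
        rw [heq, map_smul_eq_mul, Complex.norm_I, one_mul]
      linarith [hfval ▸ h]
    have hsum : N T ≤ N ((2 : ℂ)⁻¹ • (T + Ts)) + N ((2 : ℂ)⁻¹ • (T - Ts)) := by
      have heq : T = (2 : ℂ)⁻¹ • (T + Ts) + (2 : ℂ)⁻¹ • (T - Ts) := by module
      calc N T = N ((2 : ℂ)⁻¹ • (T + Ts) + (2 : ℂ)⁻¹ • (T - Ts)) := by rw [← heq]
        _ ≤ _ := map_add_le_add N _ _
    linarith
  · intro hSA
    have hNTs : N Ts = N T := (hSA T Ts hTs).symm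
    rw [hW]
    exact ciSup_le fun θ => by have := hbound θ; linarith
end
end

section
/- If N_A is submultiplicative, then for T in B_A(H): ω_{N_A}(T) ≥ sqrt( N_A(T^{♯_A}T + TT^{♯_A})/4 + |N_A(Re_A(T))² − N_A(Im_A(T))²|/2 ). -/
noncomputable section

open ContinuousLinearMap

variable {H : Type*} [NormedAddCommGroup H] [InnerProductSpace ℂ H] [CompleteSpace H]

lemma sqrtA_exists (A : H →L[ℂ] H) (hApos : A.IsPositive) :
    ∃ B : H →L[ℂ] H, IsSelfAdjoint B ∧ B * B = A := by
  refine ⟨CFC.sqrt A, ?_, ?_⟩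
  · exact ((ContinuousLinearMap.nonneg_iff_isPositive _).mp (CFC.sqrt_nonneg A)).isSelfAdjoint
  · have := CFC.sq_sqrt A ((ContinuousLinearMap.nonneg_iff_isPositive A).mpr hApos)
    rwa [sq] at this

lemma aNorm_eq (A B : H →L[ℂ] H) (hB : IsSelfAdjoint B) (hBA : B * B = A) (x : H) :
    aNorm A x = ‖B x‖ := by
  have hs := isSelfAdjoint_iff_isSymmetric.mp hB
  have h1 : (inner ℂ (A x) x : ℂ) = inner ℂ (B x) (B x) := by
    rw [← hBA, ContinuousLinearMap.mul_apply]
    exact hs (B x) x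
  rw [aNorm, h1]
  rw [show (inner ℂ (B x) (B x) : ℂ).re = ‖B x‖ ^ 2 from by
    rw [← inner_self_eq_norm_sq (𝕜 := ℂ), RCLike.re_to_complex]]
  exact Real.sqrt_sq (norm_nonneg _)

lemma pow_comm_star (A W : H →L[ℂ] H) (hA : IsSelfAdjoint A) (hAW : IsSelfAdjoint (A * W))
    (n : ℕ) : A * W ^ n = (star W) ^ n * A := by
  have hcomm : A * W = star W * A := by
    conv_lhs => rw [← hAW.star_eq]
    rw [star_mul, hA.star_eq]
  induction n with
  | zero => simp
  | succ n ih =>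
    rw [pow_succ, pow_succ, ← mul_assoc, ih, mul_assoc, hcomm, ← mul_assoc]

lemma pow_sa (A W : H →L[ℂ] H) (hA : IsSelfAdjoint A) (hAW : IsSelfAdjoint (A * W))
    (n : ℕ) : IsSelfAdjoint (A * W ^ n) := by
  rw [IsSelfAdjoint, star_mul, hA.star_eq, star_pow, ← pow_comm_star A W hA hAW]

lemma step (A B W : H →L[ℂ] H) (hB : IsSelfAdjoint B) (hBA : B * B = A)
    (hAW : IsSelfAdjoint (A * W)) (x : H) :
    ‖B (W x)‖ ^ 2 ≤ ‖B x‖ * ‖B (W (W x))‖ := by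
  have hsB := isSelfAdjoint_iff_isSymmetric.mp hB
  have hsAW := isSelfAdjoint_iff_isSymmetric.mp hAW
  have hBB : ∀ y, B (B y) = A y := fun y => by rw [← hBA]; rfl
  have c1 : (inner ℂ (B (W x)) (B (W x)) : ℂ) = inner ℂ (B x) (B (W (W x))) := by
    calc (inner ℂ (B (W x)) (B (W x)) : ℂ)
        = inner ℂ (B (B (W x))) (W x) := (hsB (B (W x)) (W x)).symm
      _ = inner ℂ ((A * W) x) (W x) := by rw [hBB]; rfl
      _ = inner ℂ x ((A * W) (W x)) := hsAW x (W x)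
      _ = inner ℂ x (B (B (W (W x)))) := by
          rw [show (A * W) (W x) = A (W (W x)) from rfl, hBB]
      _ = inner ℂ (B x) (B (W (W x))) := (hsB x (B (W (W x)))).symm
  have h2 : (‖B (W x)‖ : ℝ) ^ 2 = (inner ℂ (B (W x)) (B (W x)) : ℂ).re := by
    rw [← inner_self_eq_norm_sq (𝕜 := ℂ), RCLike.re_to_complex]
  rw [h2, c1]
  calc (inner ℂ (B x) (B (W (W x))) : ℂ).re
      ≤ ‖B x‖ * ‖B (W (W x))‖ := by
        rw [← RCLike.re_to_complex]; exact re_inner_le_norm _ _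

lemma iterate_ineq (A B W : H →L[ℂ] H) (hB : IsSelfAdjoint B) (hBA : B * B = A)
    (hA : IsSelfAdjoint A) (hAW : IsSelfAdjoint (A * W)) (x : H) (n : ℕ) :
    ‖B (W x)‖ ^ (2 ^ n) ≤ ‖B x‖ ^ (2 ^ n - 1) * ‖B ((W ^ (2 ^ n)) x)‖ := by
  induction n with
  | zero => simp
  | succ n ih =>
    have hpow : W ^ (2 ^ (n + 1)) = W ^ (2 ^ n) * W ^ (2 ^ n) := by
      rw [← pow_add]; congr 1; omega
    have hone : 1 ≤ 2 ^ n := Nat.one_le_two_pow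
    have htwo : 2 ^ (n + 1) = 2 * 2 ^ n := by rw [pow_succ]; ring
    have hstep := step A B (W ^ (2 ^ n)) hB hBA (pow_sa A W hA hAW (2 ^ n)) x
    have happ : (W ^ (2 ^ (n + 1))) x = (W ^ (2 ^ n)) ((W ^ (2 ^ n)) x) := by
      rw [hpow]; rfl
    calc ‖B (W x)‖ ^ (2 ^ (n + 1)) = (‖B (W x)‖ ^ (2 ^ n)) ^ 2 := by
          rw [← pow_mul]; congr 1
      _ ≤ (‖B x‖ ^ (2 ^ n - 1) * ‖B ((W ^ (2 ^ n)) x)‖) ^ 2 := by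
          exact pow_le_pow_left₀ (by positivity) ih 2
      _ = ‖B x‖ ^ (2 ^ (n + 1) - 2) * ‖B ((W ^ (2 ^ n)) x)‖ ^ 2 := by
          rw [mul_pow, ← pow_mul]; congr 2; omega
      _ ≤ ‖B x‖ ^ (2 ^ (n + 1) - 2) * (‖B x‖ * ‖B ((W ^ (2 ^ n)) ((W ^ (2 ^ n)) x))‖) := by
          have : (0:ℝ) ≤ ‖B x‖ ^ (2 ^ (n + 1) - 2) := by positivity
          exact mul_le_mul_of_nonneg_left hstep this
      _ = ‖B x‖ ^ (2 ^ (n + 1) - 1) * ‖B ((W ^ (2 ^ (n + 1))) x)‖ := by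
          rw [happ, ← mul_assoc, ← pow_succ]; congr 2; omega

lemma key_bound (A B W : H →L[ℂ] H) (hB : IsSelfAdjoint B) (hBA : B * B = A)
    (hA : IsSelfAdjoint A) (hAW : IsSelfAdjoint (A * W)) (x : H) :
    ‖B (W x)‖ ≤ ‖W‖ * ‖B x‖ := by
  by_contra hcon
  push_neg at hcon
  set u := ‖B (W x)‖ with hu_def
  set a := ‖B x‖ with ha_def
  set w := ‖W‖ with hw_def
  have hu : 0 < u := lt_of_le_of_lt (by positivity) hcon
  have ha0 : 0 ≤ a := norm_nonneg _
  have hw0 : 0 ≤ w := norm_nonneg _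
  set C := ‖B‖ * ‖x‖ with hC_def
  have hC0 : 0 ≤ C := by positivity
  have hbound : ∀ n : ℕ, u ^ (2 ^ n) ≤ a ^ (2 ^ n - 1) * C * w ^ (2 ^ n) := by
    intro n
    have h1 := iterate_ineq A B W hB hBA hA hAW x n
    have h2 : ‖B ((W ^ (2 ^ n)) x)‖ ≤ C * w ^ (2 ^ n) := by
      calc ‖B ((W ^ (2 ^ n)) x)‖ ≤ ‖B‖ * ‖(W ^ (2 ^ n)) x‖ := B.le_opNorm _
        _ ≤ ‖B‖ * (‖W ^ (2 ^ n)‖ * ‖x‖) := by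
            exact mul_le_mul_of_nonneg_left ((W ^ (2 ^ n)).le_opNorm x) (norm_nonneg _)
        _ ≤ ‖B‖ * (w ^ (2 ^ n) * ‖x‖) := by
            have := norm_pow_le' W (n := 2 ^ n) (by positivity)
            exact mul_le_mul_of_nonneg_left
              (mul_le_mul_of_nonneg_right this (norm_nonneg _)) (norm_nonneg _)
        _ = C * w ^ (2 ^ n) := by ring
    calc u ^ (2 ^ n) ≤ a ^ (2 ^ n - 1) * ‖B ((W ^ (2 ^ n)) x)‖ := h1
      _ ≤ a ^ (2 ^ n - 1) * (C * w ^ (2 ^ n)) := by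
          exact mul_le_mul_of_nonneg_left h2 (by positivity)
      _ = a ^ (2 ^ n - 1) * C * w ^ (2 ^ n) := by ring
  rcases eq_or_lt_of_le ha0 with ha | ha
  · have := hbound 1
    simp only [← ha] at this
    norm_num at this
    nlinarith
  rcases eq_or_lt_of_le hw0 with hw | hw
  · have := hbound 1
    rw [← hw] at this
    norm_num at this
    nlinarith
  set q := u / (w * a) with hq_def
  have hq : 1 < q := by
    rw [hq_def, lt_div_iff₀ (by positivity)]
    linarith [hcon]
  have hqn : ∀ n : ℕ, q ^ (2 ^ n) ≤ C / a := by
    intro n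
    have hone : 1 ≤ 2 ^ n := Nat.one_le_two_pow
    have hh : a ^ (2 ^ n - 1) * a = a ^ (2 ^ n) := by
      rw [← pow_succ]; congr 1; omega
    rw [hq_def, div_pow, div_le_div_iff₀ (by positivity) ha]
    calc u ^ 2 ^ n * a ≤ (a ^ (2 ^ n - 1) * C * w ^ (2 ^ n)) * a :=
          mul_le_mul_of_nonneg_right (hbound n) ha0
      _ = C * w ^ (2 ^ n) * (a ^ (2 ^ n - 1) * a) := by ring
      _ = C * (w * a) ^ 2 ^ n := by
          rw [hh, mul_pow]; ring
  obtain ⟨n, hn⟩ := pow_unbounded_of_one_lt (C / a) hq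
  have h2n : q ^ n ≤ q ^ (2 ^ n) := pow_le_pow_right₀ hq.le (Nat.lt_two_pow_self (n := n)).le
  linarith [hqn n]

lemma half_bound (A B S V : H →L[ℂ] H) (hB : IsSelfAdjoint B) (hBA : B * B = A)
    (hAS : A * S = star V * A) (hAVS : IsSelfAdjoint (A * (V * S))) (x : H) :
    ‖B (S x)‖ ^ 2 ≤ ‖V * S‖ * ‖B x‖ ^ 2 := by
  have hsB := isSelfAdjoint_iff_isSymmetric.mp hB
  have hBB : ∀ y, B (B y) = A y := fun y => by rw [← hBA]; rfl
  have hA : IsSelfAdjoint A := by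
    rw [← hBA]; exact (by rw [IsSelfAdjoint, star_mul, hB.star_eq])
  have c1 : (inner ℂ (B (S x)) (B (S x)) : ℂ) = inner ℂ (B x) (B ((V * S) x)) := by
    calc (inner ℂ (B (S x)) (B (S x)) : ℂ)
        = inner ℂ (B (B (S x))) (S x) := (hsB (B (S x)) (S x)).symm
      _ = inner ℂ ((A * S) x) (S x) := by rw [hBB]; rfl
      _ = inner ℂ ((star V) (A x)) (S x) := by rw [hAS]; rfl
      _ = inner ℂ (A x) (V (S x)) := by
          rw [ContinuousLinearMap.star_eq_adjoint]
          exact ContinuousLinearMap.adjoint_inner_left V (S x) (A x)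
      _ = inner ℂ (B (B x)) ((V * S) x) := by rw [hBB]; rfl
      _ = inner ℂ (B x) (B ((V * S) x)) := hsB (B x) ((V * S) x)
  have h2 : (‖B (S x)‖ : ℝ) ^ 2 = (inner ℂ (B (S x)) (B (S x)) : ℂ).re := by
    rw [← inner_self_eq_norm_sq (𝕜 := ℂ), RCLike.re_to_complex]
  rw [h2, c1]
  have h3 : (inner ℂ (B x) (B ((V * S) x)) : ℂ).re ≤ ‖B x‖ * ‖B ((V * S) x)‖ := by
    rw [← RCLike.re_to_complex]; exact re_inner_le_norm _ _
  have h4 : ‖B ((V * S) x)‖ ≤ ‖V * S‖ * ‖B x‖ := key_bound A B (V * S) hB hBA hA hAVS x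
  nlinarith [norm_nonneg (B x), norm_nonneg (V * S)]

lemma memBAhalf_comb (A T Ts : H →L[ℂ] H) (hApos : A.IsPositive)
    (h : A ∘L Ts = adjoint T ∘L A) (c d : ℂ) : MemBAhalf A (c • T + d • Ts) := by
  obtain ⟨B, hB, hBA⟩ := sqrtA_exists A hApos
  have hA : IsSelfAdjoint A := hApos.isSelfAdjoint
  have hATs : A * Ts = star T * A := by
    rw [ContinuousLinearMap.mul_def, ContinuousLinearMap.mul_def,
      ContinuousLinearMap.star_eq_adjoint]
    exact h
  have hAT : A * T = star Ts * A := by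
    have := congrArg star hATs
    rw [star_mul, star_mul, hA.star_eq, star_star] at this
    exact this.symm
  have hATsT : IsSelfAdjoint (A * (Ts * T)) := by
    rw [← mul_assoc, hATs]
    exact hA.conjugate' T
  have hATTs : IsSelfAdjoint (A * (T * Ts)) := by
    rw [← mul_assoc, hAT]
    exact hA.conjugate' Ts
  have hT : ∀ x, ‖B (T x)‖ ≤ (Real.sqrt ‖Ts * T‖) * ‖B x‖ := by
    intro x
    have h1 := half_bound A B T Ts hB hBA hAT hATsT x
    have h2 : ‖B (T x)‖ = Real.sqrt (‖B (T x)‖ ^ 2) := (Real.sqrt_sq (norm_nonneg _)).symm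
    rw [h2]
    calc Real.sqrt (‖B (T x)‖ ^ 2) ≤ Real.sqrt (‖Ts * T‖ * ‖B x‖ ^ 2) :=
          Real.sqrt_le_sqrt h1
      _ = Real.sqrt ‖Ts * T‖ * ‖B x‖ := by
          rw [Real.sqrt_mul (norm_nonneg _), Real.sqrt_sq (norm_nonneg _)]
  have hTs : ∀ x, ‖B (Ts x)‖ ≤ (Real.sqrt ‖T * Ts‖) * ‖B x‖ := by
    intro x
    have h1 := half_bound A B Ts T hB hBA hATs hATTs x
    have h2 : ‖B (Ts x)‖ = Real.sqrt (‖B (Ts x)‖ ^ 2) := (Real.sqrt_sq (norm_nonneg _)).symm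
    rw [h2]
    calc Real.sqrt (‖B (Ts x)‖ ^ 2) ≤ Real.sqrt (‖T * Ts‖ * ‖B x‖ ^ 2) :=
          Real.sqrt_le_sqrt h1
      _ = Real.sqrt ‖T * Ts‖ * ‖B x‖ := by
          rw [Real.sqrt_mul (norm_nonneg _), Real.sqrt_sq (norm_nonneg _)]
  refine ⟨‖c‖ * Real.sqrt ‖Ts * T‖ + ‖d‖ * Real.sqrt ‖T * Ts‖ + 1, by positivity, fun x => ?_⟩
  have hax : aNorm A x = ‖B x‖ := aNorm_eq A B hB hBA x
  have haTx : aNorm A ((c • T + d • Ts) x) = ‖c • B (T x) + d • B (Ts x)‖ := by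
    rw [aNorm_eq A B hB hBA]
    congr 1
    rw [ContinuousLinearMap.add_apply, ContinuousLinearMap.smul_apply,
      ContinuousLinearMap.smul_apply, map_add, map_smul, map_smul]
  rw [haTx, hax]
  calc ‖c • B (T x) + d • B (Ts x)‖ ≤ ‖c • B (T x)‖ + ‖d • B (Ts x)‖ := norm_add_le _ _
    _ = ‖c‖ * ‖B (T x)‖ + ‖d‖ * ‖B (Ts x)‖ := by rw [norm_smul, norm_smul]
    _ ≤ ‖c‖ * (Real.sqrt ‖Ts * T‖ * ‖B x‖) + ‖d‖ * (Real.sqrt ‖T * Ts‖ * ‖B x‖) := by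
        gcongr
        · exact hT x
        · exact hTs x
    _ ≤ (‖c‖ * Real.sqrt ‖Ts * T‖ + ‖d‖ * Real.sqrt ‖T * Ts‖ + 1) * ‖B x‖ := by
        nlinarith [norm_nonneg (B x)]

theorem stmt5 (A : H →L[ℂ] H) (hA : A ≠ 0) (hApos : A.IsPositive)
    (N : Seminorm ℂ (H →L[ℂ] H)) (hN : Submult A N)
    (T Ts : H →L[ℂ] H) (hTs : IsSharp A T Ts) :
    wNA N T Ts ≥
      Real.sqrt (N (Ts ∘L T + T ∘L Ts) / 4 +
        |(N (ReA T Ts) : ℝ) ^ 2 - (N (ImA T Ts) : ℝ) ^ 2| / 2) := by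
  obtain ⟨h1, -⟩ := hTs
  have hRmem : MemBAhalf A (ReA T Ts) := by
    have he : ReA T Ts = (2:ℂ)⁻¹ • T + (2:ℂ)⁻¹ • Ts := by rw [ReA, smul_add]
    rw [he]; exact memBAhalf_comb A T Ts hApos h1 _ _
  have hJmem : MemBAhalf A (ImA T Ts) := by
    have he : ImA T Ts = ((2:ℂ)*Complex.I)⁻¹ • T + (-((2:ℂ)*Complex.I)⁻¹) • Ts := by
      rw [ImA, smul_sub, sub_eq_add_neg, ← neg_smul]
    rw [he]; exact memBAhalf_comb A T Ts hApos h1 _ _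
  set a := (N (ReA T Ts) : ℝ) with ha_def
  set b := (N (ImA T Ts) : ℝ) with hb_def
  have ha0 : 0 ≤ a := apply_nonneg N _
  have hb0 : 0 ≤ b := apply_nonneg N _
  have hid : Ts ∘L T + T ∘L Ts
      = (2:ℂ) • (ReA T Ts ∘L ReA T Ts) + (2:ℂ) • (ImA T Ts ∘L ImA T Ts) := by
    have hI : ((2:ℂ) * Complex.I)⁻¹ = -(2⁻¹) * Complex.I := by
      rw [mul_inv, Complex.inv_I]; ring
    rw [ReA, ImA, hI]
    ext x
    simp only [ContinuousLinearMap.add_apply, ContinuousLinearMap.coe_comp',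
      Function.comp_apply, ContinuousLinearMap.smul_apply, map_add, map_smul, map_sub,
      ContinuousLinearMap.coe_smul', Pi.smul_apply, ContinuousLinearMap.sub_apply]
    match_scalars <;> (ring_nf; simp [Complex.I_sq]; try ring_nf)
  have hK : (N (Ts ∘L T + T ∘L Ts) : ℝ) ≤ 2 * a ^ 2 + 2 * b ^ 2 := by
    rw [hid]
    calc (N ((2:ℂ) • (ReA T Ts ∘L ReA T Ts) + (2:ℂ) • (ImA T Ts ∘L ImA T Ts)) : ℝ)
        ≤ N ((2:ℂ) • (ReA T Ts ∘L ReA T Ts)) + N ((2:ℂ) • (ImA T Ts ∘L ImA T Ts)) :=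
          map_add_le_add N _ _
      _ = 2 * N (ReA T Ts ∘L ReA T Ts) + 2 * N (ImA T Ts ∘L ImA T Ts) := by
          rw [map_smul_eq_mul, map_smul_eq_mul]; norm_num
      _ ≤ 2 * (a * a) + 2 * (b * b) := by
          gcongr
          · exact hN _ _ hRmem hRmem
          · exact hN _ _ hJmem hJmem
      _ = 2 * a ^ 2 + 2 * b ^ 2 := by ring
  have hwna : wNA N T Ts = ⨆ θ : ℝ, N (ReA (Complex.exp ((θ : ℂ) * Complex.I) • T)
      (Complex.exp (-((θ : ℂ) * Complex.I)) • Ts)) := rfl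
  have hFbdd : BddAbove (Set.range (fun θ : ℝ => (N (ReA (Complex.exp ((θ : ℂ) * Complex.I) • T)
      (Complex.exp (-((θ : ℂ) * Complex.I)) • Ts)) : ℝ))) := by
    refine ⟨2⁻¹ * ((N T : ℝ) + N Ts), ?_⟩
    rintro r ⟨θ, rfl⟩
    have e1 : ‖Complex.exp ((θ : ℂ) * Complex.I)‖ = 1 := by
      exact Complex.norm_exp_ofReal_mul_I θ
    have e2 : ‖Complex.exp (-((θ : ℂ) * Complex.I))‖ = 1 := by
      rw [show -((θ : ℂ) * Complex.I) = ((-θ : ℝ) : ℂ) * Complex.I by push_cast; ring]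
      exact Complex.norm_exp_ofReal_mul_I (-θ)
    simp only []
    calc (N (ReA (Complex.exp ((θ : ℂ) * Complex.I) • T)
          (Complex.exp (-((θ : ℂ) * Complex.I)) • Ts)) : ℝ)
        = N ((2:ℂ)⁻¹ • (Complex.exp ((θ : ℂ) * Complex.I) • T
            + Complex.exp (-((θ : ℂ) * Complex.I)) • Ts)) := rfl
      _ = ‖(2:ℂ)⁻¹‖ * N (Complex.exp ((θ : ℂ) * Complex.I) • T
            + Complex.exp (-((θ : ℂ) * Complex.I)) • Ts) := map_smul_eq_mul N _ _
      _ ≤ ‖(2:ℂ)⁻¹‖ * (N (Complex.exp ((θ : ℂ) * Complex.I) • T)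
            + N (Complex.exp (-((θ : ℂ) * Complex.I)) • Ts)) := by
          exact mul_le_mul_of_nonneg_left (map_add_le_add N _ _) (norm_nonneg _)
      _ = 2⁻¹ * ((N T : ℝ) + N Ts) := by
          rw [map_smul_eq_mul, map_smul_eq_mul, e1, e2]
          norm_num
  have hFa : a ≤ wNA N T Ts := by
    have h0 : (N (ReA (Complex.exp (((0:ℝ) : ℂ) * Complex.I) • T)
        (Complex.exp (-(((0:ℝ) : ℂ) * Complex.I)) • Ts)) : ℝ) = a := by
      rw [Complex.ofReal_zero, zero_mul, neg_zero, Complex.exp_zero, one_smul, one_smul]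
    rw [hwna, ← h0]
    exact le_ciSup hFbdd (0:ℝ)
  have hFb : b ≤ wNA N T Ts := by
    have e1 : Complex.exp (((-(Real.pi/2) : ℝ) : ℂ) * Complex.I) = -Complex.I := by
      push_cast
      rw [Complex.exp_mul_I]
      simp [Complex.cos_neg, Complex.sin_neg, Complex.cos_pi_div_two, Complex.sin_pi_div_two]
    have e2 : Complex.exp (-(((-(Real.pi/2) : ℝ) : ℂ) * Complex.I)) = Complex.I := by
      push_cast
      rw [show -(-((Real.pi:ℂ)/2) * Complex.I) = ((Real.pi:ℂ)/2) * Complex.I by ring,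
        Complex.exp_mul_I]
      simp [Complex.cos_pi_div_two, Complex.sin_pi_div_two]
    have hRe : ReA ((-Complex.I) • T) (Complex.I • Ts) = ImA T Ts := by
      have hI : ((2:ℂ) * Complex.I)⁻¹ = -(2⁻¹) * Complex.I := by
        rw [mul_inv, Complex.inv_I]; ring
      rw [ReA, ImA, hI]
      module
    have h0 : (N (ReA (Complex.exp (((-(Real.pi/2) : ℝ) : ℂ) * Complex.I) • T)
        (Complex.exp (-(((-(Real.pi/2) : ℝ) : ℂ) * Complex.I)) • Ts)) : ℝ) = b := by
      rw [e1, e2, hRe]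
    rw [hwna, ← h0]
    exact le_ciSup hFbdd (-(Real.pi/2))
  rw [ge_iff_le]
  have hmax : (N (Ts ∘L T + T ∘L Ts) : ℝ) / 4 + |a ^ 2 - b ^ 2| / 2 ≤ (max a b) ^ 2 := by
    rcases le_total a b with h | h
    · rw [max_eq_right h, abs_of_nonpos (by nlinarith)]; nlinarith
    · rw [max_eq_left h, abs_of_nonneg (by nlinarith)]; nlinarith
  calc Real.sqrt ((N (Ts ∘L T + T ∘L Ts) : ℝ) / 4 + |a ^ 2 - b ^ 2| / 2)
      ≤ Real.sqrt ((max a b) ^ 2) := Real.sqrt_le_sqrt hmax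
    _ = max a b := Real.sqrt_sq (le_max_of_le_left ha0)
    _ ≤ wNA N T Ts := max_le hFa hFb
end
end

section
/- If N_A is submultiplicative, then ω_{N_A}(T) = (1/2)√(N_A(T^{♯_A}T + TT^{♯_A})) if and only if N_A(Re_A(e^{iθ}T)) = N_A(Im_A(e^{iθ}T)) = (1/2)√(N_A(T^{♯_A}T + TT^{♯_A})) for all θ ∈ ℝ. -/
noncomputable section

open ContinuousLinearMap

variable {H : Type*} [NormedAddCommGroup H] [InnerProductSpace ℂ H] [CompleteSpace H]

set_option maxHeartbeats 1000000
set_option synthInstance.maxHeartbeats 1000000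

namespace Stmt7Aux

variable {H : Type*} [NormedAddCommGroup H] [InnerProductSpace ℂ H] [CompleteSpace H]

/-- square root of a positive operator -/
def sqA (A : H →L[ℂ] H) : H →L[ℂ] H := CFC.sqrt A

lemma sqA_sa (A : H →L[ℂ] H) : IsSelfAdjoint (sqA A) := by
  have hB : (0:H →L[ℂ] H) ≤ sqA A := CFC.sqrt_nonneg (a := A)
  have := (ContinuousLinearMap.le_def 0 (sqA A)).1 hB
  simpa using this.isSelfAdjoint

lemma sqA_inner (A : H →L[ℂ] H) (hA : A.IsPositive) (x y : H) :
    (inner ℂ (A x) y : ℂ) = inner ℂ (sqA A x) (sqA A y) := by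
  have h0 : 0 ≤ A := (ContinuousLinearMap.le_def 0 A).2 (by simpa using hA)
  have hB2 : (sqA A) ^ 2 = A := CFC.sq_sqrt A h0
  have hx : A x = sqA A (sqA A x) := by
    conv_lhs => rw [← hB2, pow_two, ContinuousLinearMap.mul_apply]
  rw [hx, ← ContinuousLinearMap.adjoint_inner_left, (sqA_sa A).adjoint_eq]

lemma aNorm_eq (A : H →L[ℂ] H) (hA : A.IsPositive) (x : H) :
    aNorm A x = ‖sqA A x‖ := by
  have h : ((inner ℂ (sqA A x) (sqA A x) : ℂ)).re = ‖sqA A x‖ ^ 2 := by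
    rw [← RCLike.re_to_complex, inner_self_eq_norm_sq (𝕜 := ℂ)]
  rw [aNorm, sqA_inner A hA, h]
  exact Real.sqrt_sq (norm_nonneg _)

lemma aNorm_nonneg (A : H →L[ℂ] H) (x : H) : 0 ≤ aNorm A x := Real.sqrt_nonneg _

open ContinuousLinearMap in
lemma aNorm_comp_le (A S : H →L[ℂ] H) (hA : A.IsPositive)
    (hS : IsSelfAdjoint (A ∘L S)) (x : H) :
    ‖sqA A (S x)‖ ≤ ‖S‖ * ‖sqA A x‖ := by
  set B := sqA A with hBdef
  have hBA := hA.isSelfAdjoint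
  have step : ∀ y : H, ‖B (S y)‖ ^ 2 ≤ ‖B y‖ * ‖B (S (S y))‖ := by
    intro y
    have h1 : (‖B (S y)‖ : ℝ) ^ 2 = RCLike.re (inner ℂ (B (S y)) (B (S y)) : ℂ) :=
      (inner_self_eq_norm_sq _).symm
    have h2 : (inner ℂ (B (S y)) (B (S y)) : ℂ) = inner ℂ (B y) (B (S (S y))) := by
      rw [← sqA_inner A hA, ← sqA_inner A hA]
      calc (inner ℂ (A (S y)) (S y) : ℂ)
          = inner ℂ ((A ∘L S) y) (S y) := rfl
        _ = inner ℂ (adjoint (A ∘L S) y) (S y) := by rw [hS.adjoint_eq]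
        _ = inner ℂ y ((A ∘L S) (S y)) := adjoint_inner_left _ _ _
        _ = inner ℂ y (A (S (S y))) := rfl
        _ = inner ℂ (adjoint A y) (S (S y)) := (adjoint_inner_left _ _ _).symm
        _ = inner ℂ (A y) (S (S y)) := by rw [hBA.adjoint_eq]
    calc ‖B (S y)‖ ^ 2 = RCLike.re (inner ℂ (B y) (B (S (S y))) : ℂ) := by rw [h1, h2]
      _ ≤ ‖(inner ℂ (B y) (B (S (S y))) : ℂ)‖ := RCLike.re_le_norm _
      _ ≤ ‖B y‖ * ‖B (S (S y))‖ := norm_inner_le_norm _ _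
  set g : ℕ → ℝ := fun n => ‖B ((S ^ n) x)‖ with hg
  have gnn : ∀ n, 0 ≤ g n := fun n => norm_nonneg _
  have hiter : ∀ n : ℕ, (S ^ (n+1)) x = S ((S ^ n) x) := by
    intro n; rw [pow_succ']; rfl
  have hstep : ∀ n, g (n+1) ^ 2 ≤ g n * g (n+2) := by
    intro n
    have := step ((S ^ n) x)
    have e1 : S ((S ^ n) x) = (S ^ (n+1)) x := (hiter n).symm
    have e2 : S (S ((S ^ n) x)) = (S ^ (n+2)) x := by
      rw [e1, ← hiter (n+1)]
    simp only [hg]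
    rw [← e1, ← e2]
    exact this
  have hratio : ∀ n, g 1 * g n ≤ g 0 * g (n+1) := by
    intro n
    induction n with
    | zero => rw [mul_comm]
    | succ n ih =>
      rcases eq_or_lt_of_le (gnn (n+1)) with h | h
      · rw [← h, mul_zero]; exact mul_nonneg (gnn 0) (gnn (n+2))
      · rcases eq_or_lt_of_le (gnn n) with h0 | h0
        · exfalso
          have h2 := hstep n
          rw [← h0, zero_mul] at h2
          nlinarith [mul_pos h h]
        · have key : (g 1 * g (n+1)) * (g n * g (n+1)) ≤ (g 0 * g (n+2)) * (g n * g (n+1)) := by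
            calc (g 1 * g (n+1)) * (g n * g (n+1)) = (g 1 * g n) * g (n+1) ^ 2 := by ring
              _ ≤ (g 0 * g (n+1)) * (g n * g (n+2)) :=
                  mul_le_mul ih (hstep n) (sq_nonneg _) (mul_nonneg (gnn 0) (gnn (n+1)))
              _ = (g 0 * g (n+2)) * (g n * g (n+1)) := by ring
          exact le_of_mul_le_mul_right key (mul_pos h0 h)
  have hpow : ∀ n, g 1 ^ (n+1) ≤ g 0 ^ n * g (n+1) := by
    intro n
    induction n with
    | zero => simp
    | succ n ih =>
      calc g 1 ^ (n+2) = g 1 ^ (n+1) * g 1 := by ring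
        _ ≤ (g 0 ^ n * g (n+1)) * g 1 := mul_le_mul_of_nonneg_right ih (gnn 1)
        _ = g 0 ^ n * (g 1 * g (n+1)) := by ring
        _ ≤ g 0 ^ n * (g 0 * g (n+2)) :=
            mul_le_mul_of_nonneg_left (hratio (n+1)) (pow_nonneg (gnn 0) n)
        _ = g 0 ^ (n+1) * g (n+2) := by ring
  have hbound : ∀ n, g n ≤ (‖B‖ * ‖x‖) * ‖S‖ ^ n := by
    intro n
    rcases n with _ | m
    · simpa [hg] using le_opNorm B x
    · calc g (m+1) = ‖B ((S ^ (m+1)) x)‖ := rfl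
        _ ≤ ‖B‖ * ‖(S ^ (m+1)) x‖ := le_opNorm _ _
        _ ≤ ‖B‖ * (‖S ^ (m+1)‖ * ‖x‖) := by gcongr; exact le_opNorm _ _
        _ ≤ ‖B‖ * (‖S‖ ^ (m+1) * ‖x‖) := by
            gcongr
            exact norm_pow_le' S (Nat.succ_pos m)
        _ = (‖B‖ * ‖x‖) * ‖S‖ ^ (m+1) := by ring
  show g 1 ≤ ‖S‖ * g 0
  rcases eq_or_lt_of_le (gnn 0) with h0 | h0
  · have h2 := hstep 0
    have hg1 : g 1 = 0 := by nlinarith [gnn 1, gnn 2]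
    rw [hg1, ← h0, mul_zero]
  · rcases eq_or_lt_of_le (norm_nonneg S) with hS0 | hS0
    · have hSz : S = 0 := by rwa [eq_comm, norm_eq_zero] at hS0
      have : g 1 = 0 := by simp [hg, hSz, pow_one]
      rw [this]; positivity
    · by_contra hcon
      push_neg at hcon
      set C := ‖B‖ * ‖x‖ with hC
      have hg0C : g 0 ≤ C := by simpa using hbound 0
      have hCpos : 0 < C := lt_of_lt_of_le h0 hg0C
      set q := g 1 / (‖S‖ * g 0) with hqdef
      have hq1 : 1 < q := (one_lt_div (by positivity)).2 hcon
      have hq : ∀ n, q ^ (n+1) ≤ C / g 0 := by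
        intro n
        rw [hqdef, div_pow, div_le_div_iff₀ (by positivity) h0]
        calc g 1 ^ (n+1) * g 0 ≤ (g 0 ^ n * g (n+1)) * g 0 :=
              mul_le_mul_of_nonneg_right (hpow n) (gnn 0)
          _ ≤ (g 0 ^ n * (C * ‖S‖ ^ (n+1))) * g 0 := by
              have := hbound (n+1)
              gcongr
          _ = C * (‖S‖ * g 0) ^ (n+1) := by ring
      obtain ⟨n, hn⟩ := pow_unbounded_of_one_lt (C / g 0) hq1
      have hmono : q ^ n ≤ q ^ (n+1) := pow_le_pow_right₀ (le_of_lt hq1) (Nat.le_succ n)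
      linarith [hq n]

open ContinuousLinearMap in
lemma memBAhalf_aux (A T S : H →L[ℂ] H) (hA : A.IsPositive)
    (hSsa : IsSelfAdjoint (A ∘L S))
    (he : ∀ x, (inner ℂ (A (T x)) (T x) : ℂ) = inner ℂ (A x) (S x)) : MemBAhalf A T := by
  refine ⟨Real.sqrt ‖S‖ + 1, by positivity, fun x => ?_⟩
  rw [aNorm_eq A hA, aNorm_eq A hA]
  have h1 : ‖sqA A (T x)‖ ^ 2 ≤ ‖S‖ * ‖sqA A x‖ ^ 2 := by
    have e1 : (‖sqA A (T x)‖ : ℝ) ^ 2 = RCLike.re (inner ℂ (sqA A (T x)) (sqA A (T x)) : ℂ) :=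
      (inner_self_eq_norm_sq _).symm
    have e2 : (inner ℂ (sqA A (T x)) (sqA A (T x)) : ℂ) = inner ℂ (sqA A x) (sqA A (S x)) := by
      rw [← sqA_inner A hA, ← sqA_inner A hA]; exact he x
    calc ‖sqA A (T x)‖ ^ 2 = RCLike.re (inner ℂ (sqA A x) (sqA A (S x)) : ℂ) := by rw [e1, e2]
      _ ≤ ‖(inner ℂ (sqA A x) (sqA A (S x)) : ℂ)‖ := RCLike.re_le_norm _
      _ ≤ ‖sqA A x‖ * ‖sqA A (S x)‖ := norm_inner_le_norm _ _
      _ ≤ ‖sqA A x‖ * (‖S‖ * ‖sqA A x‖) :=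
          mul_le_mul_of_nonneg_left (aNorm_comp_le A S hA hSsa x) (norm_nonneg _)
      _ = ‖S‖ * ‖sqA A x‖ ^ 2 := by ring
  have h2 : ‖sqA A (T x)‖ ≤ Real.sqrt ‖S‖ * ‖sqA A x‖ := by
    have h3 := Real.sqrt_le_sqrt h1
    rw [Real.sqrt_sq (norm_nonneg _), Real.sqrt_mul (norm_nonneg S),
      Real.sqrt_sq (norm_nonneg _)] at h3
    exact h3
  nlinarith [norm_nonneg (sqA A x), Real.sqrt_nonneg ‖S‖]

open ContinuousLinearMap in
lemma sharp_flip (A T Ts : H →L[ℂ] H) (hA : A.IsPositive) (hTs : IsSharp A T Ts) :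
    A ∘L T = adjoint Ts ∘L A := by
  have h := congrArg ContinuousLinearMap.adjoint hTs.1
  rw [adjoint_comp, adjoint_comp, adjoint_adjoint, hA.isSelfAdjoint.adjoint_eq] at h
  exact h.symm

open ContinuousLinearMap in
lemma memBAhalf_of_sharp (A T Ts : H →L[ℂ] H) (hA : A.IsPositive) (hTs : IsSharp A T Ts) :
    MemBAhalf A T ∧ MemBAhalf A Ts := by
  have hflip := sharp_flip A T Ts hA hTs
  constructor
  · apply memBAhalf_aux A T (Ts ∘L T) hA
    · have e : A ∘L (Ts ∘L T) = (adjoint T) ∘L (A ∘L T) := by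
        rw [← comp_assoc, hTs.1, comp_assoc]
      rw [isSelfAdjoint_iff', e, adjoint_comp, adjoint_comp, adjoint_adjoint,
        hA.isSelfAdjoint.adjoint_eq, comp_assoc]
    · intro x
      calc (inner ℂ (A (T x)) (T x) : ℂ)
          = inner ℂ ((A ∘L T) x) (T x) := rfl
        _ = inner ℂ (adjoint Ts (A x)) (T x) := by rw [hflip]; rfl
        _ = inner ℂ (A x) (Ts (T x)) := adjoint_inner_left _ _ _
        _ = inner ℂ (A x) ((Ts ∘L T) x) := rfl
  · apply memBAhalf_aux A Ts (T ∘L Ts) hA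
    · have e : A ∘L (T ∘L Ts) = (adjoint Ts) ∘L (A ∘L Ts) := by
        rw [← comp_assoc, hflip, comp_assoc]
      rw [isSelfAdjoint_iff', e, adjoint_comp, adjoint_comp, adjoint_adjoint,
        hA.isSelfAdjoint.adjoint_eq, comp_assoc]
    · intro x
      calc (inner ℂ (A (Ts x)) (Ts x) : ℂ)
          = inner ℂ ((A ∘L Ts) x) (Ts x) := rfl
        _ = inner ℂ (adjoint T (A x)) (Ts x) := by rw [hTs.1]; rfl
        _ = inner ℂ (A x) (T (Ts x)) := adjoint_inner_left _ _ _
        _ = inner ℂ (A x) ((T ∘L Ts) x) := rfl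

lemma memBAhalf_smul (A T : H →L[ℂ] H) (hA : A.IsPositive) (c : ℂ)
    (h : MemBAhalf A T) : MemBAhalf A (c • T) := by
  obtain ⟨k, hk, hb⟩ := h
  refine ⟨(‖c‖ + 1) * k, by positivity, fun x => ?_⟩
  have e : aNorm A ((c • T) x) = ‖c‖ * aNorm A (T x) := by
    rw [aNorm_eq A hA, aNorm_eq A hA]
    simp [norm_smul]
  rw [e]
  have h1 : ‖c‖ * aNorm A (T x) ≤ ‖c‖ * (k * aNorm A x) :=
    mul_le_mul_of_nonneg_left (hb x) (norm_nonneg c)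
  nlinarith [aNorm_nonneg A x, aNorm_nonneg A (T x)]

lemma memBAhalf_add (A T S : H →L[ℂ] H) (hA : A.IsPositive)
    (h1 : MemBAhalf A T) (h2 : MemBAhalf A S) : MemBAhalf A (T + S) := by
  obtain ⟨k1, hk1, hb1⟩ := h1
  obtain ⟨k2, hk2, hb2⟩ := h2
  refine ⟨k1 + k2, by positivity, fun x => ?_⟩
  have e : aNorm A ((T + S) x) ≤ aNorm A (T x) + aNorm A (S x) := by
    rw [aNorm_eq A hA, aNorm_eq A hA, aNorm_eq A hA]
    calc ‖sqA A ((T + S) x)‖ = ‖sqA A (T x) + sqA A (S x)‖ := by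
          congr 1
          simp
      _ ≤ ‖sqA A (T x)‖ + ‖sqA A (S x)‖ := norm_add_le _ _
  calc aNorm A ((T + S) x) ≤ aNorm A (T x) + aNorm A (S x) := e
    _ ≤ k1 * aNorm A x + k2 * aNorm A x := add_le_add (hb1 x) (hb2 x)
    _ = (k1 + k2) * aNorm A x := by ring

lemma memBAhalf_sub (A T S : H →L[ℂ] H) (hA : A.IsPositive)
    (h1 : MemBAhalf A T) (h2 : MemBAhalf A S) : MemBAhalf A (T - S) := by
  have e : T - S = T + (-1 : ℂ) • S := by
    rw [neg_one_smul, sub_eq_add_neg]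
  rw [e]
  exact memBAhalf_add A T _ hA h1 (memBAhalf_smul A S hA _ h2)

open ContinuousLinearMap in
lemma key_id (T Ts : H →L[ℂ] H) {u v : ℂ} (huv : u * v = 1) :
    (2:ℂ) • (ReA (u•T) (v•Ts) ∘L ReA (u•T) (v•Ts))
      + (2:ℂ) • (ImA (u•T) (v•Ts) ∘L ImA (u•T) (v•Ts)) = Ts ∘L T + T ∘L Ts := by
  ext x
  simp only [ReA, ImA, add_apply, comp_apply, smul_apply, sub_apply, map_add, map_sub,
    map_smul, smul_add, smul_sub]
  match_scalars <;> field_simp <;> ring_nf <;>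
    simp only [Complex.I_sq] <;> ring_nf
  · linear_combination (-2:ℂ) * huv
  · linear_combination (-2:ℂ) * huv

lemma exp_pi_div_two_mul_I : Complex.exp ((Real.pi : ℂ)/2 * Complex.I) = Complex.I := by
  rw [Complex.exp_mul_I]
  simp

lemma ImA_rot (T Ts : H →L[ℂ] H) (θ : ℝ) :
    ImA (Complex.exp ((θ:ℂ)*Complex.I) • T) (Complex.exp (-((θ:ℂ)*Complex.I)) • Ts)
      = ReA (Complex.exp ((↑(θ - Real.pi/2):ℂ)*Complex.I) • T)
          (Complex.exp (-((↑(θ - Real.pi/2):ℂ)*Complex.I)) • Ts) := by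
  have h1 : Complex.exp ((↑(θ - Real.pi/2):ℂ)*Complex.I)
      = Complex.exp ((θ:ℂ)*Complex.I) * (-Complex.I) := by
    push_cast
    rw [sub_mul, Complex.exp_sub, exp_pi_div_two_mul_I, div_eq_mul_inv, Complex.inv_I]
  have h2 : Complex.exp (-((↑(θ - Real.pi/2):ℂ)*Complex.I))
      = Complex.exp (-((θ:ℂ)*Complex.I)) * Complex.I := by
    push_cast
    rw [show -((↑θ - (Real.pi:ℂ)/2) * Complex.I)
        = -((θ:ℂ)*Complex.I) + (Real.pi:ℂ)/2 * Complex.I from by ring,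
      Complex.exp_add, exp_pi_div_two_mul_I]
  rw [h1, h2]
  ext x
  simp only [ReA, ImA, ContinuousLinearMap.add_apply, ContinuousLinearMap.smul_apply,
    ContinuousLinearMap.sub_apply, map_smul, smul_add, smul_sub]
  match_scalars <;> field_simp <;> ring_nf <;> simp [Complex.I_sq] <;> ring_nf

lemma norm_exp_mul_I (θ : ℝ) : ‖Complex.exp ((θ:ℂ) * Complex.I)‖ = 1 := by
  simp [Complex.norm_exp]

lemma norm_exp_neg_mul_I (θ : ℝ) : ‖Complex.exp (-((θ:ℂ) * Complex.I))‖ = 1 := by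
  simp [Complex.norm_exp]

lemma N_ReA_le (N : Seminorm ℂ (H →L[ℂ] H)) (T Ts : H →L[ℂ] H) (θ : ℝ) :
    N (ReA (Complex.exp ((θ:ℂ)*Complex.I) • T) (Complex.exp (-((θ:ℂ)*Complex.I)) • Ts))
      ≤ (N T + N Ts) / 2 := by
  rw [ReA, map_smul_eq_mul]
  have h1 : ‖(2:ℂ)⁻¹‖ = 1/2 := by norm_num
  rw [h1]
  have h2 : N (Complex.exp ((θ:ℂ)*Complex.I) • T + Complex.exp (-((θ:ℂ)*Complex.I)) • Ts)
      ≤ N T + N Ts := by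
    calc N (Complex.exp ((θ:ℂ)*Complex.I) • T + Complex.exp (-((θ:ℂ)*Complex.I)) • Ts)
        ≤ N (Complex.exp ((θ:ℂ)*Complex.I) • T) + N (Complex.exp (-((θ:ℂ)*Complex.I)) • Ts) :=
          map_add_le_add N _ _
      _ = N T + N Ts := by
          rw [map_smul_eq_mul, map_smul_eq_mul, norm_exp_mul_I, norm_exp_neg_mul_I,
            one_mul, one_mul]
  linarith

end Stmt7Aux

open Stmt7Aux in
theorem stmt7 (A : H →L[ℂ] H) (hA : A ≠ 0) (hApos : A.IsPositive)
    (N : Seminorm ℂ (H →L[ℂ] H)) (hN : Submult A N)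
    (T Ts : H →L[ℂ] H) (hTs : IsSharp A T Ts) :
    wNA N T Ts = (1 / 2) * Real.sqrt (N (Ts ∘L T + T ∘L Ts)) ↔
      ∀ θ : ℝ,
        N (ReA (Complex.exp ((θ : ℂ) * Complex.I) • T)
            (Complex.exp (-((θ : ℂ) * Complex.I)) • Ts)) =
          (1 / 2) * Real.sqrt (N (Ts ∘L T + T ∘L Ts)) ∧
        N (ImA (Complex.exp ((θ : ℂ) * Complex.I) • T)
            (Complex.exp (-((θ : ℂ) * Complex.I)) • Ts)) =
          (1 / 2) * Real.sqrt (N (Ts ∘L T + T ∘L Ts)) := by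
  have hbdd : BddAbove (Set.range fun θ : ℝ =>
      N (ReA (Complex.exp ((θ:ℂ) * Complex.I) • T)
        (Complex.exp (-((θ:ℂ) * Complex.I)) • Ts))) := by
    refine ⟨(N T + N Ts) / 2, ?_⟩
    rintro r ⟨θ, rfl⟩
    exact N_ReA_le N T Ts θ
  have hfle : ∀ θ : ℝ,
      N (ReA (Complex.exp ((θ:ℂ) * Complex.I) • T)
        (Complex.exp (-((θ:ℂ) * Complex.I)) • Ts)) ≤ wNA N T Ts := fun θ =>
    le_ciSup hbdd θ
  have hKnn : (0:ℝ) ≤ N (Ts ∘L T + T ∘L Ts) := apply_nonneg N _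
  have hcnn : (0:ℝ) ≤ (1 / 2) * Real.sqrt (N (Ts ∘L T + T ∘L Ts)) := by positivity
  have hc2 : N (Ts ∘L T + T ∘L Ts)
      = 4 * ((1 / 2) * Real.sqrt (N (Ts ∘L T + T ∘L Ts))) ^ 2 := by
    rw [mul_pow, Real.sq_sqrt hKnn]; ring
  obtain ⟨hT, hTsm⟩ := memBAhalf_of_sharp A T Ts hApos hTs
  constructor
  · intro hsup θ
    set u := Complex.exp ((θ:ℂ) * Complex.I) with hu
    set v := Complex.exp (-((θ:ℂ) * Complex.I)) with hv
    have huv : u * v = 1 := by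
      rw [hu, hv, ← Complex.exp_add]
      simp
    have hR : MemBAhalf A (ReA (u • T) (v • Ts)) := by
      rw [ReA]
      exact memBAhalf_smul A _ hApos _
        (memBAhalf_add A _ _ hApos (memBAhalf_smul A _ hApos _ hT)
          (memBAhalf_smul A _ hApos _ hTsm))
    have hI : MemBAhalf A (ImA (u • T) (v • Ts)) := by
      rw [ImA]
      exact memBAhalf_smul A _ hApos _
        (memBAhalf_sub A _ _ hApos (memBAhalf_smul A _ hApos _ hT)
          (memBAhalf_smul A _ hApos _ hTsm))
    have hKle : N (Ts ∘L T + T ∘L Ts)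
        ≤ 2 * (N (ReA (u • T) (v • Ts)) * N (ReA (u • T) (v • Ts)))
          + 2 * (N (ImA (u • T) (v • Ts)) * N (ImA (u • T) (v • Ts))) := by
      calc N (Ts ∘L T + T ∘L Ts)
          = N ((2:ℂ) • (ReA (u • T) (v • Ts) ∘L ReA (u • T) (v • Ts))
              + (2:ℂ) • (ImA (u • T) (v • Ts) ∘L ImA (u • T) (v • Ts))) := by
            rw [key_id T Ts huv]
        _ ≤ N ((2:ℂ) • (ReA (u • T) (v • Ts) ∘L ReA (u • T) (v • Ts)))
              + N ((2:ℂ) • (ImA (u • T) (v • Ts) ∘L ImA (u • T) (v • Ts))) :=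
            map_add_le_add N _ _
        _ = 2 * N (ReA (u • T) (v • Ts) ∘L ReA (u • T) (v • Ts))
              + 2 * N (ImA (u • T) (v • Ts) ∘L ImA (u • T) (v • Ts)) := by
            rw [map_smul_eq_mul, map_smul_eq_mul]
            norm_num
        _ ≤ 2 * (N (ReA (u • T) (v • Ts)) * N (ReA (u • T) (v • Ts)))
              + 2 * (N (ImA (u • T) (v • Ts)) * N (ImA (u • T) (v • Ts))) := by
            gcongr
            · exact hN _ _ hR hR
            · exact hN _ _ hI hI
    have hRc : N (ReA (u • T) (v • Ts)) ≤ (1 / 2) * Real.sqrt (N (Ts ∘L T + T ∘L Ts)) := by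
      rw [← hsup]; exact hfle θ
    have hIc : N (ImA (u • T) (v • Ts)) ≤ (1 / 2) * Real.sqrt (N (Ts ∘L T + T ∘L Ts)) := by
      rw [hu, hv, ImA_rot T Ts θ, ← hsup]
      exact hfle (θ - Real.pi / 2)
    have hRnn := apply_nonneg N (ReA (u • T) (v • Ts))
    have hInn := apply_nonneg N (ImA (u • T) (v • Ts))
    constructor
    · refine le_antisymm hRc ?_
      nlinarith
    · refine le_antisymm hIc ?_
      nlinarith
  · intro hall
    have : wNA N T Ts = ⨆ _ : ℝ, (1 / 2) * Real.sqrt (N (Ts ∘L T + T ∘L Ts)) := by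
      rw [wNA]
      exact iSup_congr fun θ => (hall θ).1
    rw [this, ciSup_const]
end
end

section
/- If N_A satisfies the A-power property, then for T in B_A(H): ω_{N_A}(T) ≤ √( (1/2)ω_{N_A}(T²) + (1/4)N_A(T^{♯_A}T + TT^{♯_A}) ). -/
noncomputable section

open ContinuousLinearMap

variable {H : Type*} [NormedAddCommGroup H] [InnerProductSpace ℂ H] [CompleteSpace H]

theorem stmt9 (A : H →L[ℂ] H) (hA : A ≠ 0) (hApos : A.IsPositive)
    (N : Seminorm ℂ (H →L[ℂ] H)) (hN : APower A N)
    (T Ts : H →L[ℂ] H) (hTs : IsSharp A T Ts) :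
    wNA N T Ts ≤
      Real.sqrt ((1 / 2) * wNA N (T ^ 2) (Ts ^ 2) +
        (1 / 4) * N (Ts ∘L T + T ∘L Ts)) := by
  have hA_sa : star A = A := hApos.isSelfAdjoint
  have hm : A * Ts = star T * A := by
    simpa [mul_def, star_eq_adjoint] using hTs.1
  have h1 : star (A * T) = A * Ts := by rw [star_mul, hA_sa, ← hm]
  have h2 : star (A * Ts) = A * T := by rw [← h1, star_star]
  have hw2 : 0 ≤ wNA N (T ^ 2) (Ts ^ 2) := Real.iSup_nonneg fun θ => apply_nonneg N _
  have hr : 0 ≤ (1 / 2) * wNA N (T ^ 2) (Ts ^ 2) + (1 / 4) * N (Ts ∘L T + T ∘L Ts) := by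
    have := apply_nonneg N (Ts ∘L T + T ∘L Ts); positivity
  have hnorm_exp : ∀ z : ℂ, ‖Complex.exp z‖ = Real.exp z.re := fun z => Complex.norm_exp z
  -- boundedness of the wNA family for T^2
  have hbdd : BddAbove (Set.range fun θ' : ℝ =>
      N (ReA (Complex.exp ((θ' : ℂ) * Complex.I) • (T ^ 2))
        (Complex.exp (-((θ' : ℂ) * Complex.I)) • (Ts ^ 2)))) := by
    refine ⟨2⁻¹ * (N (T ^ 2) + N (Ts ^ 2)), ?_⟩
    rintro x ⟨θ', rfl⟩
    have : N (ReA (Complex.exp ((θ' : ℂ) * Complex.I) • (T ^ 2))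
        (Complex.exp (-((θ' : ℂ) * Complex.I)) • (Ts ^ 2))) ≤
        ‖(2:ℂ)⁻¹‖ * (N (Complex.exp ((θ' : ℂ) * Complex.I) • (T ^ 2)) +
          N (Complex.exp (-((θ' : ℂ) * Complex.I)) • (Ts ^ 2))) := by
      rw [ReA, map_smul_eq_mul]
      exact mul_le_mul_of_nonneg_left (map_add_le_add N _ _) (norm_nonneg _)
    refine this.trans ?_
    rw [map_smul_eq_mul, map_smul_eq_mul]
    simp [hnorm_exp]
  rw [wNA]
  apply ciSup_le
  intro θ
  rw [Real.le_sqrt (apply_nonneg N _) hr]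
  set a := Complex.exp ((θ : ℂ) * Complex.I) with ha
  set b := Complex.exp (-((θ : ℂ) * Complex.I)) with hb
  have hab : a * b = 1 := by rw [ha, hb, ← Complex.exp_add, add_neg_cancel, Complex.exp_zero]
  have hba : b * a = 1 := by rw [mul_comm]; exact hab
  set S := ReA (a • T) (b • Ts) with hSdef
  have hconj_a : star a = b := by
    rw [ha, hb, Complex.star_def, ← Complex.exp_conj]
    congr 1
    simp [map_mul, Complex.conj_ofReal]
  have hconj_b : star b = a := by rw [← hconj_a, star_star]
  have hAS : A * S = (2:ℂ)⁻¹ • (a • (A * T) + b • (A * Ts)) := by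
    simp [hSdef, ReA, mul_add, mul_smul_comm]
  have hS : IsSelfAdjoint (A ∘L S) := by
    rw [← mul_def, IsSelfAdjoint, hAS, star_smul, star_add, star_smul, star_smul,
      h1, h2, hconj_a, hconj_b]
    simp [add_comm]
  have hpow := hN S hS 2 (by norm_num)
  have key : S ^ 2 =
      (2:ℂ)⁻¹ • (ReA (Complex.exp (((2 * θ : ℝ) : ℂ) * Complex.I) • (T ^ 2))
        (Complex.exp (-(((2 * θ : ℝ) : ℂ) * Complex.I)) • (Ts ^ 2))) +
      (4:ℂ)⁻¹ • (Ts ∘L T + T ∘L Ts) := by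
    have he2 : Complex.exp (((2 * θ : ℝ) : ℂ) * Complex.I) = a * a := by
      rw [ha, ← Complex.exp_add]
      push_cast
      ring_nf
    have he2' : Complex.exp (-(((2 * θ : ℝ) : ℂ) * Complex.I)) = b * b := by
      rw [hb, ← Complex.exp_add]
      push_cast
      ring_nf
    have p1 : (a • T) * (a • T) = (a * a) • (T * T) := by
      rw [smul_mul_assoc, mul_smul_comm, smul_smul]
    have p2 : (a • T) * (b • Ts) = T * Ts := by
      rw [smul_mul_assoc, mul_smul_comm, smul_smul, hab, one_smul]
    have p3 : (b • Ts) * (a • T) = Ts * T := by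
      rw [smul_mul_assoc, mul_smul_comm, smul_smul, hba, one_smul]
    have p4 : (b • Ts) * (b • Ts) = (b * b) • (Ts * Ts) := by
      rw [smul_mul_assoc, mul_smul_comm, smul_smul]
    have hSS : S * S = ((2:ℂ)⁻¹ * (2:ℂ)⁻¹) • ((a • T + b • Ts) * (a • T + b • Ts)) := by
      rw [hSdef, ReA, smul_mul_assoc, mul_smul_comm, smul_smul]
    rw [he2, he2', sq, sq, sq, hSS, ← mul_def, ← mul_def, add_mul, mul_add, mul_add,
      p1, p2, p3, p4, ReA]
    module
  calc (N S) ^ 2 = N (S ^ 2) := hpow.symm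
    _ ≤ ‖(2:ℂ)⁻¹‖ * N (ReA (Complex.exp (((2 * θ : ℝ) : ℂ) * Complex.I) • (T ^ 2))
          (Complex.exp (-(((2 * θ : ℝ) : ℂ) * Complex.I)) • (Ts ^ 2))) +
        ‖(4:ℂ)⁻¹‖ * N (Ts ∘L T + T ∘L Ts) := by
        rw [key]
        refine (map_add_le_add N _ _).trans ?_
        rw [map_smul_eq_mul, map_smul_eq_mul]
    _ ≤ (1 / 2) * wNA N (T ^ 2) (Ts ^ 2) + (1 / 4) * N (Ts ∘L T + T ∘L Ts) := by
        have hle : N (ReA (Complex.exp (((2 * θ : ℝ) : ℂ) * Complex.I) • (T ^ 2))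
            (Complex.exp (-(((2 * θ : ℝ) : ℂ) * Complex.I)) • (Ts ^ 2))) ≤
            wNA N (T ^ 2) (Ts ^ 2) := le_ciSup hbdd (2 * θ)
        have h2n : ‖(2:ℂ)⁻¹‖ = 1 / 2 := by simp
        have h4n : ‖(4:ℂ)⁻¹‖ = 1 / 4 := by simp
        rw [h2n, h4n]
        have := apply_nonneg N (Ts ∘L T + T ∘L Ts)
        nlinarith
end
end

section
/- For θ ∈ ℝ and T admitting an A-adjoint, the algebraic identity [Re_A(e^{iθ}T)]⁴ + [Im_A(e^{iθ}T)]⁴ = (1/2)[Re_A(e^{2iθ}T²)]² + (1/8)(T^{♯_A}T + TT^{♯_A})² holds. -/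
noncomputable section

open ContinuousLinearMap

variable {H : Type*} [NormedAddCommGroup H] [InnerProductSpace ℂ H] [CompleteSpace H]

private theorem key_alg {R : Type*} [Ring R] [Algebra ℂ R] (a b : R) :
    ((2:ℂ)⁻¹ • (a + b)) ^ 4 + ((2 * Complex.I)⁻¹ • (a - b)) ^ 4 =
    (2:ℂ)⁻¹ • ((2:ℂ)⁻¹ • (a ^ 2 + b ^ 2)) ^ 2 + (8:ℂ)⁻¹ • (b * a + a * b) ^ 2 := by
  have h : (a+b)^4 + (a-b)^4 = (2:ℂ) • ((a^2+b^2)^2) + (2:ℂ) • ((b*a+a*b)^2) := by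
    noncomm_ring
    module
  rw [smul_pow, smul_pow, smul_pow, smul_smul,
    show ((2 * Complex.I)⁻¹)^4 = ((2:ℂ)⁻¹)^4 by
      rw [inv_pow, inv_pow, mul_pow]; norm_num [Complex.I_pow_four],
    ← smul_add, h, smul_add, smul_smul, smul_smul]
  norm_num

theorem stmt11 (A : H →L[ℂ] H) (hA : A ≠ 0) (hApos : A.IsPositive)
    (T Ts : H →L[ℂ] H) (hTs : IsSharp A T Ts) (θ : ℝ) :
    (ReA (Complex.exp ((θ : ℂ) * Complex.I) • T)
        (Complex.exp (-((θ : ℂ) * Complex.I)) • Ts)) ^ 4 +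
      (ImA (Complex.exp ((θ : ℂ) * Complex.I) • T)
        (Complex.exp (-((θ : ℂ) * Complex.I)) • Ts)) ^ 4 =
    (2 : ℂ)⁻¹ • (ReA (Complex.exp (2 * (θ : ℂ) * Complex.I) • T ^ 2)
        (Complex.exp (-(2 * (θ : ℂ) * Complex.I)) • Ts ^ 2)) ^ 2 +
      (8 : ℂ)⁻¹ • (Ts ∘L T + T ∘L Ts) ^ 2 := by
  set e := Complex.exp ((θ:ℂ)*Complex.I) with he
  set f := Complex.exp (-((θ:ℂ)*Complex.I)) with hf
  have h1 : Complex.exp (2*(θ:ℂ)*Complex.I) • T^2 = (e • T)^2 := by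
    rw [smul_pow, show (2*(θ:ℂ)*Complex.I) = (θ:ℂ)*Complex.I + (θ:ℂ)*Complex.I by ring,
      Complex.exp_add, sq, he]; rw [← sq]
  have h2 : Complex.exp (-(2*(θ:ℂ)*Complex.I)) • Ts^2 = (f • Ts)^2 := by
    rw [smul_pow, show (-(2*(θ:ℂ)*Complex.I)) = -((θ:ℂ)*Complex.I) + -((θ:ℂ)*Complex.I) by ring,
      Complex.exp_add, sq, hf]; rw [← sq]
  have hfe : f * e = 1 := by rw [he, hf, ← Complex.exp_add]; simp
  have hef : e * f = 1 := by rw [he, hf, ← Complex.exp_add]; simp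
  have hc1 : Ts ∘L T = (f • Ts) * (e • T) := by
    rw [smul_mul_smul_comm, hfe, one_smul]; rfl
  have hc2 : T ∘L Ts = (e • T) * (f • Ts) := by
    rw [smul_mul_smul_comm, hef, one_smul]; rfl
  rw [ReA, ReA, ImA, h1, h2, hc1, hc2]
  exact key_alg _ _
end
end

section
/- If T in B_A(H) is A-selfadjoint and N_A is A-selfadjoint invariant, then ω_{N_A}(T) = N_A(T). -/
noncomputable section

open ContinuousLinearMap

variable {H : Type*} [NormedAddCommGroup H] [InnerProductSpace ℂ H] [CompleteSpace H]

theorem stmt12 (A : H →L[ℂ] H) (hA : A ≠ 0) (hApos : A.IsPositive)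
    (N : Seminorm ℂ (H →L[ℂ] H)) (hN : SelfadjInv A N)
    (T Ts : H →L[ℂ] H) (hT : IsSelfAdjoint (A ∘L T)) (hTs : IsSharp A T Ts) :
    wNA N T Ts = N T := by
  have hAsa : adjoint A = A := by
    have := hApos.isSelfAdjoint
    rwa [IsSelfAdjoint, star_eq_adjoint] at this
  have hAT : adjoint T ∘L A = A ∘L T := by
    have h := hT
    rw [IsSelfAdjoint, star_eq_adjoint, adjoint_comp, hAsa] at h
    exact h
  have hATs : A ∘L Ts = A ∘L T := hTs.1.trans hAT
  have hAdTs : adjoint Ts ∘L A = A ∘L T := by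
    have := congrArg adjoint hTs.1
    rw [adjoint_comp, adjoint_comp, adjoint_adjoint, hAsa] at this
    exact this
  have h2c : (starRingEnd ℂ) (2 : ℂ)⁻¹ = (2 : ℂ)⁻¹ := by
    rw [map_inv₀, Complex.conj_ofNat]
  -- key pointwise computation
  have key : ∀ θ : ℝ,
      N (ReA (Complex.exp ((θ : ℂ) * Complex.I) • T)
        (Complex.exp (-((θ : ℂ) * Complex.I)) • Ts)) = |Real.cos θ| * N T := by
    intro θ
    set e₁ : ℂ := Complex.exp ((θ : ℂ) * Complex.I) with he₁
    set e₂ : ℂ := Complex.exp (-((θ : ℂ) * Complex.I)) with he₂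
    have hconj₁ : (starRingEnd ℂ) e₁ = e₂ := by
      rw [he₁, he₂, ← Complex.exp_conj]; congr 1
      simp [mul_comm]
    have hconj₂ : (starRingEnd ℂ) e₂ = e₁ := by
      rw [he₁, he₂, ← Complex.exp_conj]; simp
    set c : ℂ := (Real.cos θ : ℂ) with hc
    have hcval : c = (e₁ + e₂) / 2 := by
      rw [hc, Complex.ofReal_cos, Complex.cos, he₁, he₂]
      ring_nf
    set S : H →L[ℂ] H := ReA (e₁ • T) (e₂ • Ts) with hS
    have hsharp : IsSharp A S (c • Ts) := by
      constructor
      · -- A ∘L (c • Ts) = adjoint S ∘L A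
        have hadjS : adjoint S = (2 : ℂ)⁻¹ • (e₂ • adjoint T + e₁ • adjoint Ts) := by
          rw [hS, ReA, map_smulₛₗ, map_add, map_smulₛₗ, map_smulₛₗ, hconj₁, hconj₂, h2c]
        rw [hadjS]
        refine ext fun x => ?_
        have h1 : adjoint T (A x) = (A ∘L Ts) x := by
          rw [hTs.1]; rfl
        have h2 : adjoint Ts (A x) = (A ∘L T) x := by
          rw [← hAdTs]; rfl
        have h3 : A (Ts x) = A (T x) := by
          have := ContinuousLinearMap.ext_iff.1 hATs x
          simpa using this
        simp only [comp_apply, smul_apply, add_apply, h1, h2, hATs]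
        rw [map_smul, h3]
        rw [← add_smul, smul_smul, hcval]
        congr 1
        ring
      · intro x
        have hx : Ts x ∈ closure (Set.range A) := hTs.2 x
        have heq : (c • Ts) x = c • (Ts x) := rfl
        rw [heq]
        have hcont : Continuous fun y : H => c • y := continuous_const_smul c
        have himg : (fun y : H => c • y) '' closure (Set.range A) ⊆
            closure ((fun y : H => c • y) '' Set.range A) :=
          image_closure_subset_closure_image hcont
        have hmem : c • Ts x ∈ (fun y : H => c • y) '' closure (Set.range A) :=
          ⟨Ts x, hx, rfl⟩
        refine closure_mono ?_ (himg hmem)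
        rintro _ ⟨_, ⟨z, rfl⟩, rfl⟩
        exact ⟨c • z, by simp⟩
    have hNS : N S = N (c • Ts) := hN S (c • Ts) hsharp
    have hNTs : N T = N Ts := hN T Ts hTs
    rw [hNS, map_smul_eq_mul, hc, Complex.norm_real, Real.norm_eq_abs, ← hNTs]
  rw [wNA]
  simp only [key]
  have hbdd : BddAbove (Set.range fun θ : ℝ => |Real.cos θ| * N T) := by
    refine ⟨N T, ?_⟩
    rintro r ⟨θ, rfl⟩
    exact (mul_le_mul_of_nonneg_right
      (abs_le.2 ⟨Real.neg_one_le_cos θ, Real.cos_le_one θ⟩) (apply_nonneg N T)).trans_eq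
      (one_mul _)
  refine le_antisymm (ciSup_le fun θ => ?_) ?_
  · exact (mul_le_mul_of_nonneg_right
      (abs_le.2 ⟨Real.neg_one_le_cos θ, Real.cos_le_one θ⟩) (apply_nonneg N T)).trans_eq
      (one_mul _)
  · have := le_ciSup hbdd (0 : ℝ)
    simpa using this
end
end

section
/- If N_A is A-selfadjoint invariant, then for all T in B_A(H): ω_{N_A}(T) = ω_{N_A}(P T) = ω_{N_A}(T P), where P is the orthogonal projection onto the closure of the range of A. -/
noncomputable section

open ContinuousLinearMap

variable {H : Type*} [NormedAddCommGroup H] [InnerProductSpace ℂ H] [CompleteSpace H]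

theorem stmt13 (A : H →L[ℂ] H) (hA : A ≠ 0) (hApos : A.IsPositive)
    (N : Seminorm ℂ (H →L[ℂ] H)) (hN : SelfadjInv A N)
    (P : H →L[ℂ] H) (hP1 : IsIdempotentElem P) (hP2 : IsSelfAdjoint P)
    (hP3 : ∀ x, P x ∈ closure (Set.range A))
    (hP4 : ∀ x ∈ closure (Set.range A), P x = x)
    (T Ts : H →L[ℂ] H) (hTs : IsSharp A T Ts) :
    wNA N T Ts = wNA N (P ∘L T) Ts ∧ wNA N T Ts = wNA N (T ∘L P) Ts := by
  obtain ⟨hTs1, hTs2⟩ := hTs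
  have hAsa : IsSelfAdjoint A := hApos.isSelfAdjoint
  have hPA : P ∘L A = A :=
    ContinuousLinearMap.ext fun x => hP4 (A x) (subset_closure ⟨x, rfl⟩)
  have hAP : A ∘L P = A := by
    have h := congrArg ContinuousLinearMap.adjoint hPA
    rwa [adjoint_comp, hP2.adjoint_eq, hAsa.adjoint_eq] at h
  -- adjoint Ts ∘L A = A ∘L (P ∘L T)
  have hTsA : adjoint Ts ∘L A = A ∘L (P ∘L T) := by
    have h := congrArg ContinuousLinearMap.adjoint hTs1
    rw [adjoint_comp, adjoint_comp, adjoint_adjoint, hAsa.adjoint_eq] at h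
    -- h : adjoint Ts ∘L A = A ∘L T
    rw [h, ← comp_assoc, hAP]
  -- the common A-adjoint for each θ
  set W : ℝ → (H →L[ℂ] H) := fun θ =>
    (2 : ℂ)⁻¹ • (Complex.exp (-((θ : ℂ) * Complex.I)) • Ts
      + Complex.exp ((θ : ℂ) * Complex.I) • (P ∘L T)) with hW
  have adjsmul : ∀ (c : ℂ) (S : H →L[ℂ] H),
      adjoint (c • S) = (starRingEnd ℂ) c • adjoint S := fun c S =>
    map_smulₛₗ (adjoint : (H →L[ℂ] H) ≃ₗᵢ⋆[ℂ] (H →L[ℂ] H)) c S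
  have hconj : ∀ θ : ℝ, (starRingEnd ℂ) (Complex.exp ((θ : ℂ) * Complex.I))
      = Complex.exp (-((θ : ℂ) * Complex.I)) := by
    intro θ
    rw [← Complex.exp_conj, map_mul, Complex.conj_I, Complex.conj_ofReal, mul_neg]
  have hconj' : ∀ θ : ℝ, (starRingEnd ℂ) (Complex.exp (-((θ : ℂ) * Complex.I)))
      = Complex.exp ((θ : ℂ) * Complex.I) := by
    intro θ
    rw [← Complex.exp_conj, map_neg, map_mul, Complex.conj_I, Complex.conj_ofReal,
      mul_neg, neg_neg]
  -- range condition for W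
  have hWrange : ∀ θ x, W θ x ∈ closure (Set.range A) := by
    intro θ x
    have hsub : closure (Set.range A)
        = ((LinearMap.range (A : H →ₗ[ℂ] H)).topologicalClosure : Set H) := by
      rw [Submodule.topologicalClosure_coe]
      congr 1
    rw [hsub]
    refine Submodule.smul_mem _ _ (Submodule.add_mem _ (Submodule.smul_mem _ _ ?_)
      (Submodule.smul_mem _ _ ?_))
    · have := hTs2 x; rwa [hsub] at this
    · have := hP3 (T x); rwa [hsub] at this
  -- main: for any S with adjoint S ∘L A = A ∘L Ts, the θ-term equals N (W θ)
  have main : ∀ S : H →L[ℂ] H, adjoint S ∘L A = A ∘L Ts → ∀ θ : ℝ,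
      N (ReA (Complex.exp ((θ : ℂ) * Complex.I) • S)
        (Complex.exp (-((θ : ℂ) * Complex.I)) • Ts)) = N (W θ) := by
    intro S hS θ
    refine hN _ _ ⟨?_, hWrange θ⟩
    unfold ReA
    rw [hW]
    simp only [map_add, adjsmul, map_smulₛₗ, hconj, hconj']
    rw [Complex.conj_inv]
    simp only [Complex.conj_ofNat]
    simp only [ContinuousLinearMap.smul_comp, ContinuousLinearMap.comp_smul,
      ContinuousLinearMap.comp_add, ContinuousLinearMap.add_comp, hS, hTsA]
  have hT : adjoint T ∘L A = A ∘L Ts := hTs1.symm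
  have hPT : adjoint (P ∘L T) ∘L A = A ∘L Ts := by
    rw [adjoint_comp, hP2.adjoint_eq, comp_assoc, hPA, hT]
  have hTP : adjoint (T ∘L P) ∘L A = A ∘L Ts := by
    rw [adjoint_comp, hP2.adjoint_eq, comp_assoc, hT, ← comp_assoc, hPA]
  constructor
  · unfold wNA
    exact congrArg _ (funext fun θ => (main T hT θ).trans (main (P ∘L T) hPT θ).symm)
  · unfold wNA
    exact congrArg _ (funext fun θ => (main T hT θ).trans (main (T ∘L P) hTP θ).symm)
end
end

section
/- If N_A is A-selfadjoint invariant and submultiplicative, then for T, S in B_A(H): ω_{N_A}(TS ± ST^{♯_A}) ≤ 2 N_A(T) ω_{N_A}(S). -/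
noncomputable section

open ContinuousLinearMap

variable {H : Type*} [NormedAddCommGroup H] [InnerProductSpace ℂ H] [CompleteSpace H]

set_option linter.unusedSectionVars false

/-!
Write `X = TS + ε S T^♯` with `|ε| = 1`, pick `μ` with `μ² = ε`, and fix `c = e^{iθ}`.
Besides `X^♯`, the operator `X' = S^♯T^♯ + ε̄ T S^♯` is an `A`-adjoint of `X`, so
`U = 2 Re_A(cX) = cX + c̄X^♯` and `V = cX + c̄X'` satisfy `AU = AV`. Then `U` and `V` have the
same distinguished `A`-adjoint, so `N_A`, being `A`-selfadjoint invariant, takes the same value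
on both. Expanding gives `μ (cX + c̄X') = TD + ε D T^♯` with
`D = cμ S + (cμ)‾ S^♯ = 2 Re_A(cμ S)`, hence by submultiplicativity and `N_A(T^♯) = N_A(T)`
`N_A(Re_A(cX)) ≤ N_A(T) N_A(D) ≤ 2 N_A(T) ω_{N_A}(S)`.

Submultiplicativity may be applied because every operator with an `A`-adjoint is
`A^{1/2}`-bounded. For an `A`-selfadjoint `R`, Cauchy–Schwarz gives
`‖Rx‖_A² ≤ ‖R²x‖_A ‖x‖_A`; iterating along `R^{2^k}` and comparing with the crude bound
`‖R^n x‖_A ≤ ‖A^{1/2}‖ ‖R‖^n ‖x‖` yields `‖Rx‖_A ≤ ‖R‖ ‖x‖_A`.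
-/

def IsAAdjoint (A T W : H →L[ℂ] H) : Prop := A ∘L W = adjoint T ∘L A

namespace IsAAdjoint

variable {A T W S V : H →L[ℂ] H}

lemma apply (h : IsAAdjoint A T W) (x : H) : A (W x) = adjoint T (A x) :=
  congr($h x)

lemma symm (hA : IsSelfAdjoint A) (h : IsAAdjoint A T W) : IsAAdjoint A W T := by
  have h' := congrArg adjoint h
  rw [adjoint_comp, adjoint_comp, hA.adjoint_eq, adjoint_adjoint] at h'
  exact h'.symm

lemma add (hT : IsAAdjoint A T W) (hS : IsAAdjoint A S V) : IsAAdjoint A (T + S) (W + V) := by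
  rw [IsAAdjoint, comp_add, hT, hS, map_add, add_comp]

lemma smul (c : ℂ) (h : IsAAdjoint A T W) : IsAAdjoint A (c • T) (starRingEnd ℂ c • W) := by
  rw [IsAAdjoint, comp_smul, h, ← smul_comp, ← star_eq_adjoint, ← star_eq_adjoint, star_smul]
  rfl

lemma comp (hT : IsAAdjoint A T W) (hS : IsAAdjoint A S V) :
    IsAAdjoint A (T ∘L S) (V ∘L W) := by
  rw [IsAAdjoint, ← comp_assoc, hS, comp_assoc, hT, adjoint_comp, comp_assoc]

lemma pow (h : IsAAdjoint A T W) (n : ℕ) : IsAAdjoint A (T ^ n) (W ^ n) := by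
  induction n with
  | zero => simp [IsAAdjoint, ← star_eq_adjoint, ← mul_def]
  | succ n ih => simpa only [← mul_def, ← pow_succ, ← pow_succ'] using h.comp ih

lemma comp_eq (h : IsAAdjoint A T W) (h' : IsAAdjoint A T V) : A ∘L W = A ∘L V :=
  Eq.trans h (Eq.symm h')

end IsAAdjoint

section ANorm

variable {A : H →L[ℂ] H}

lemma inner_apply_eq_inner_sqrt (hA : A.IsPositive) (x y : H) :
    inner ℂ (A x) y = inner ℂ (CFC.sqrt A x) (CFC.sqrt A y) := by
  have hsq : CFC.sqrt A ∘L CFC.sqrt A = A :=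
    CFC.sqrt_mul_sqrt_self A ((nonneg_iff_isPositive A).2 hA)
  have hsa : IsSelfAdjoint (CFC.sqrt A) := IsSelfAdjoint.of_nonneg (CFC.sqrt_nonneg A)
  conv_lhs => rw [← hsq]
  rw [comp_apply, ← adjoint_inner_right, hsa.adjoint_eq]

lemma aNorm_eq_norm_sqrt_apply (hA : A.IsPositive) (x : H) : aNorm A x = ‖CFC.sqrt A x‖ := by
  rw [aNorm, inner_apply_eq_inner_sqrt hA, inner_self_eq_norm_sq_to_K]
  norm_cast
  exact Real.sqrt_sq (norm_nonneg _)

lemma aNorm_nonneg (x : H) : 0 ≤ aNorm A x := Real.sqrt_nonneg _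

lemma aNorm_apply_le (hA : A.IsPositive) (x : H) : aNorm A x ≤ ‖CFC.sqrt A‖ * ‖x‖ := by
  rw [aNorm_eq_norm_sqrt_apply hA]
  exact le_opNorm _ _

lemma sq_aNorm (hA : A.IsPositive) (x : H) : aNorm A x ^ 2 = (inner ℂ (A x) x).re :=
  Real.sq_sqrt (hA.re_inner_nonneg_left x)

lemma norm_inner_apply_le_aNorm_mul_aNorm (hA : A.IsPositive) (x y : H) :
    ‖inner ℂ (A x) y‖ ≤ aNorm A x * aNorm A y := by
  rw [inner_apply_eq_inner_sqrt hA, aNorm_eq_norm_sqrt_apply hA, aNorm_eq_norm_sqrt_apply hA]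
  exact norm_inner_le_norm _ _

lemma IsAAdjoint.sq_aNorm_apply_le {T W : H →L[ℂ] H} (hA : A.IsPositive) (h : IsAAdjoint A T W)
    (x : H) : aNorm A (T x) ^ 2 ≤ aNorm A (W (T x)) * aNorm A x := by
  rw [sq_aNorm hA]
  calc (inner ℂ (A (T x)) (T x)).re = (inner ℂ (A (W (T x))) x).re := by
        rw [h.apply, adjoint_inner_left]
    _ ≤ ‖inner ℂ (A (W (T x))) x‖ := Complex.re_le_norm _
    _ ≤ aNorm A (W (T x)) * aNorm A x := norm_inner_apply_le_aNorm_mul_aNorm hA _ _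

end ANorm

lemma le_of_forall_pow_two_pow_le_mul {x y K : ℝ} (hx : 0 ≤ x) (hy : 0 ≤ y)
    (h : ∀ k : ℕ, x ^ 2 ^ k ≤ K * y ^ 2 ^ k) : x ≤ y := by
  by_contra! hyx
  have hx0 : 0 < x := hy.trans_lt hyx
  have hlim : Filter.Tendsto (fun k : ℕ => K * (y / x) ^ 2 ^ k) Filter.atTop (nhds (K * 0)) :=
    ((tendsto_pow_atTop_nhds_zero_of_lt_one (div_nonneg hy hx) ((div_lt_one hx0).2 hyx)).comp
      (tendsto_pow_atTop_atTop_of_one_lt one_lt_two)).const_mul K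
  obtain ⟨k, hk⟩ := ((hlim.eventually (gt_mem_nhds (by simp))).exists :
    ∃ k : ℕ, K * (y / x) ^ 2 ^ k < 1)
  have := h k
  rw [div_pow, mul_div_assoc', div_lt_one (by positivity)] at hk
  linarith

lemma le_mul_of_sq_le_mul_of_le_mul_pow {a : ℕ → ℝ} {C M : ℝ} (ha : ∀ n, 0 ≤ a n) (hM : 0 ≤ M)
    (hsq : ∀ n, a n ^ 2 ≤ a (2 * n) * a 0) (hbound : ∀ n, a n ≤ C * M ^ n) :
    a 1 ≤ M * a 0 := by
  rcases (ha 0).eq_or_lt with h0 | h0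
  · have h1 := hsq 1
    rw [← h0, mul_zero] at h1
    rw [← h0, mul_zero]
    exact ((sq_nonpos_iff _).1 h1).le
  have key : ∀ k : ℕ, a 1 ^ 2 ^ k * a 0 ≤ a (2 ^ k) * a 0 ^ 2 ^ k := by
    intro k
    induction k with
    | zero => simp
    | succ k ih =>
      have hsq' := pow_le_pow_left₀ (mul_nonneg (pow_nonneg (ha 1) _) (ha 0)) ih 2
      have hstep := mul_le_mul_of_nonneg_right (hsq (2 ^ k)) (pow_nonneg (ha 0) (2 ^ (k + 1)))
      rw [← pow_succ', pow_succ] at hstep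
      refine le_of_mul_le_mul_right ?_ h0
      calc a 1 ^ 2 ^ (k + 1) * a 0 * a 0 = (a 1 ^ 2 ^ k * a 0) ^ 2 := by ring
        _ ≤ (a (2 ^ k) * a 0 ^ 2 ^ k) ^ 2 := hsq'
        _ = a (2 ^ k) ^ 2 * a 0 ^ 2 ^ (k + 1) := by ring
        _ ≤ a (2 ^ (k + 1)) * a 0 ^ 2 ^ (k + 1) * a 0 := by nlinarith
  refine le_of_forall_pow_two_pow_le_mul (ha 1) (by positivity) (K := C / a 0) fun k => ?_
  rw [div_mul_eq_mul_div, le_div_iff₀ h0, mul_pow]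
  nlinarith [key k, hbound (2 ^ k), pow_pos h0 (2 ^ k)]

section Bounded

variable {A : H →L[ℂ] H}

lemma norm_pow_apply_le (R : H →L[ℂ] H) (x : H) (n : ℕ) : ‖(R ^ n) x‖ ≤ ‖R‖ ^ n * ‖x‖ := by
  induction n with
  | zero => simp
  | succ n ih =>
    calc ‖(R ^ (n + 1)) x‖ = ‖R ((R ^ n) x)‖ := by rw [pow_succ']; rfl
      _ ≤ ‖R‖ * (‖R‖ ^ n * ‖x‖) := (le_opNorm _ _).trans (by gcongr)
      _ = ‖R‖ ^ (n + 1) * ‖x‖ := by ring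

lemma IsAAdjoint.aNorm_apply_le_of_self (hA : A.IsPositive) {R : H →L[ℂ] H}
    (h : IsAAdjoint A R R) (x : H) : aNorm A (R x) ≤ ‖R‖ * aNorm A x := by
  have := le_mul_of_sq_le_mul_of_le_mul_pow (a := fun n => aNorm A ((R ^ n) x))
    (C := ‖CFC.sqrt A‖ * ‖x‖) (fun n => Real.sqrt_nonneg _) (norm_nonneg R) (fun n => ?_)
    (fun n => ?_)
  · simpa using this
  · simpa [two_mul, pow_add] using (h.pow n).sq_aNorm_apply_le hA x
  · calc aNorm A ((R ^ n) x) ≤ ‖CFC.sqrt A‖ * ‖(R ^ n) x‖ := aNorm_apply_le hA _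
      _ ≤ ‖CFC.sqrt A‖ * (‖R‖ ^ n * ‖x‖) := by gcongr; exact norm_pow_apply_le R x n
      _ = ‖CFC.sqrt A‖ * ‖x‖ * ‖R‖ ^ n := by ring

lemma IsAAdjoint.memBAhalf (hA : A.IsPositive) {T W : H →L[ℂ] H} (h : IsAAdjoint A T W) :
    MemBAhalf A T := by
  have hR : IsAAdjoint A (W ∘L T) (W ∘L T) := (h.symm hA.isSelfAdjoint).comp h
  refine ⟨√‖W ∘L T‖ + 1, by positivity, fun x => ?_⟩
  have hsq : aNorm A (T x) ^ 2 ≤ (√‖W ∘L T‖ * aNorm A x) ^ 2 := by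
    rw [mul_pow, Real.sq_sqrt (norm_nonneg _), sq (aNorm A x), ← mul_assoc]
    exact (h.sq_aNorm_apply_le hA x).trans
      (mul_le_mul_of_nonneg_right (hR.aNorm_apply_le_of_self hA x) (aNorm_nonneg x))
  calc aNorm A (T x) ≤ √‖W ∘L T‖ * aNorm A x :=
        (pow_le_pow_iff_left₀ (aNorm_nonneg _)
          (mul_nonneg (Real.sqrt_nonneg _) (aNorm_nonneg x)) two_ne_zero).1 hsq
    _ ≤ (√‖W ∘L T‖ + 1) * aNorm A x :=
        mul_le_mul_of_nonneg_right (le_add_of_nonneg_right zero_le_one) (aNorm_nonneg x)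

end Bounded

section Sharp

variable {A : H →L[ℂ] H}

lemma IsSharp.isAAdjoint {T Ts : H →L[ℂ] H} (h : IsSharp A T Ts) : IsAAdjoint A T Ts := h.1

lemma IsAAdjoint.memBA (hA : IsSelfAdjoint A) {T W : H →L[ℂ] H} (h : IsAAdjoint A T W) :
    MemBA A T := by
  set K := (LinearMap.range (A : H →ₗ[ℂ] H)).topologicalClosure
  have hAP : A ∘L K.starProjection = A := by
    ext x
    have hker : x - K.starProjection x ∈ LinearMap.ker (A : H →ₗ[ℂ] H) := by
      have := K.sub_starProjection_mem_orthogonal x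
      rwa [Submodule.orthogonal_closure, orthogonal_range, hA.adjoint_eq] at this
    rw [LinearMap.mem_ker, map_sub, sub_eq_zero] at hker
    exact hker.symm
  refine ⟨K.starProjection ∘L W, by rw [← comp_assoc, hAP]; exact h, fun x => ?_⟩
  have := K.starProjection_apply_mem (W x)
  rwa [← SetLike.mem_coe, Submodule.topologicalClosure_coe, LinearMap.coe_range] at this

lemma IsSharp.of_comp_eq (hA : IsSelfAdjoint A) {U V Us : H →L[ℂ] H} (h : IsSharp A U Us)
    (hUV : A ∘L U = A ∘L V) : IsSharp A V Us := by
  have hadj := congrArg adjoint hUV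
  rw [adjoint_comp, adjoint_comp, hA.adjoint_eq] at hadj
  exact ⟨h.1.trans hadj, h.2⟩

lemma SelfadjInv.map_eq_of_comp_eq {N : Seminorm ℂ (H →L[ℂ] H)} (hN : SelfadjInv A N)
    (hA : IsSelfAdjoint A) {U V W : H →L[ℂ] H} (hU : IsAAdjoint A U W)
    (hUV : A ∘L U = A ∘L V) : N U = N V := by
  obtain ⟨Us, hUs⟩ := hU.memBA hA
  rw [hN U Us hUs, hN V Us (hUs.of_comp_eq hA hUV)]

end Sharp

section NumericalRadius

open Complex

variable {A : H →L[ℂ] H} {N : Seminorm ℂ (H →L[ℂ] H)}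

lemma starRingEnd_exp_ofReal_mul_I (θ : ℝ) : starRingEnd ℂ (exp (θ * I)) = exp (-(θ * I)) := by
  rw [← exp_conj, map_mul, conj_ofReal, conj_I, mul_neg]

lemma seminorm_reA (U V : H →L[ℂ] H) : N (ReA U V) = 2⁻¹ * N (U + V) := by
  rw [ReA, map_smul_eq_mul, norm_inv, RCLike.norm_ofNat]

lemma seminorm_smul_add_conj_smul_le_wNA (S Ss : H →L[ℂ] H) {z : ℂ} (hz : ‖z‖ = 1) :
    N (z • S + starRingEnd ℂ z • Ss) ≤ 2 * wNA N S Ss := by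
  obtain ⟨θ, rfl⟩ := (norm_eq_one_iff z).1 hz
  have hbdd :
      BddAbove (Set.range fun φ : ℝ => N (ReA (exp (φ * I) • S) (exp (-(φ * I)) • Ss))) := by
    refine ⟨2⁻¹ * (N S + N Ss), ?_⟩
    rintro _ ⟨φ, rfl⟩
    dsimp only
    rw [seminorm_reA, ← starRingEnd_exp_ofReal_mul_I]
    gcongr
    refine (map_add_le_add N _ _).trans_eq ?_
    rw [map_smul_eq_mul, map_smul_eq_mul, RCLike.norm_conj, norm_exp_ofReal_mul_I, one_mul, one_mul]
  have := le_ciSup hbdd θ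
  rw [seminorm_reA, ← starRingEnd_exp_ofReal_mul_I] at this
  rw [wNA]
  linarith

lemma Submult.seminorm_comp_add_smul_comp_le (hA : A.IsPositive) (hN : SelfadjInv A N)
    (hN' : Submult A N) {T Ts E E' : H →L[ℂ] H} (hTs : IsSharp A T Ts) (hE : IsAAdjoint A E E')
    {ε : ℂ} (hε : ‖ε‖ = 1) : N (T ∘L E + ε • (E ∘L Ts)) ≤ 2 * N T * N E := by
  have hT := hTs.isAAdjoint.memBAhalf hA
  have hTs' := (hTs.isAAdjoint.symm hA.isSelfAdjoint).memBAhalf hA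
  have hE' := hE.memBAhalf hA
  calc N (T ∘L E + ε • (E ∘L Ts)) ≤ N (T ∘L E) + N (E ∘L Ts) :=
        (map_add_le_add N _ _).trans_eq (by rw [map_smul_eq_mul, hε, one_mul])
    _ ≤ N T * N E + N E * N Ts := add_le_add (hN' _ _ hT hE') (hN' _ _ hE' hTs')
    _ = 2 * N T * N E := by rw [← hN T Ts hTs]; ring

lemma smul_comp_add_smul_comp_eq (T Ts S Ss : H →L[ℂ] H) (c c' : ℂ) {μ : ℂ} (hμ : ‖μ‖ = 1) :
    μ • (c • (T ∘L S + μ ^ 2 • (S ∘L Ts)) + c' • (Ss ∘L Ts + starRingEnd ℂ μ ^ 2 • (T ∘L Ss))) =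
      T ∘L ((c * μ) • S + (c' * starRingEnd ℂ μ) • Ss) +
        μ ^ 2 • (((c * μ) • S + (c' * starRingEnd ℂ μ) • Ss) ∘L Ts) := by
  have hμ' : μ * starRingEnd ℂ μ = 1 := by
    rw [mul_conj, normSq_eq_norm_sq, hμ]; norm_num
  simp only [comp_add, add_comp, comp_smul, smul_comp]
  linear_combination (norm := module) (c' * starRingEnd ℂ μ) • hμ' • (T ∘L Ss) -
    (c' * μ) • hμ' • (Ss ∘L Ts)

theorem wNA_comp_add_smul_comp_le (hA : A.IsPositive) (hN : SelfadjInv A N) (hN' : Submult A N)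
    {T Ts S Ss W : H →L[ℂ] H} (hTs : IsSharp A T Ts) (hSs : IsAAdjoint A S Ss) {ε : ℂ}
    (hε : ‖ε‖ = 1) (hW : IsAAdjoint A (T ∘L S + ε • (S ∘L Ts)) W) :
    wNA N (T ∘L S + ε • (S ∘L Ts)) W ≤ 2 * N T * wNA N S Ss := by
  have hA' := hA.isSelfAdjoint
  obtain ⟨μ, rfl⟩ := IsAlgClosed.exists_pow_nat_eq ε two_pos
  have hμ : ‖μ‖ = 1 := by rwa [norm_pow, pow_eq_one_iff_of_nonneg (norm_nonneg _) two_ne_zero] at hε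
  set X := T ∘L S + μ ^ 2 • (S ∘L Ts)
  set W' := Ss ∘L Ts + starRingEnd ℂ μ ^ 2 • (T ∘L Ss)
  have hW' : IsAAdjoint A X W' := by
    have := (hTs.isAAdjoint.comp hSs).add ((hSs.comp (hTs.isAAdjoint.symm hA')).smul (μ ^ 2))
    rwa [map_pow] at this
  refine ciSup_le fun θ => ?_
  rw [← starRingEnd_exp_ofReal_mul_I]
  set c := exp (θ * I)
  have hc : ‖c‖ = 1 := norm_exp_ofReal_mul_I θ
  set E := (c * μ) • S + (starRingEnd ℂ c * starRingEnd ℂ μ) • Ss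
  have hAE : A ∘L (c • X + starRingEnd ℂ c • W) = A ∘L (c • X + starRingEnd ℂ c • W') := by
    simp only [comp_add, comp_smul, hW.comp_eq hW']
  calc N (ReA (c • X) (starRingEnd ℂ c • W)) = 2⁻¹ * N (c • X + starRingEnd ℂ c • W) :=
        seminorm_reA _ _
    _ = 2⁻¹ * N (T ∘L E + μ ^ 2 • (E ∘L Ts)) := by
        rw [hN.map_eq_of_comp_eq hA' ((hW.smul c).add ((hW.symm hA').smul _)) hAE,
          ← smul_comp_add_smul_comp_eq T Ts S Ss c _ hμ, map_smul_eq_mul, hμ, one_mul]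
    _ ≤ 2⁻¹ * (2 * N T * N E) := by
        gcongr
        exact hN'.seminorm_comp_add_smul_comp_le hA hN hTs
          ((hSs.smul _).add ((hSs.symm hA').smul _)) (by rw [norm_pow, hμ, one_pow])
    _ ≤ 2⁻¹ * (2 * N T * (2 * wNA N S Ss)) := by
        gcongr
        simpa only [E, map_mul] using
          seminorm_smul_add_conj_smul_le_wNA S Ss (by rw [norm_mul, hc, hμ, one_mul] : ‖c * μ‖ = 1)
    _ = 2 * N T * wNA N S Ss := by ring

end NumericalRadius

theorem stmt15_general (A : H →L[ℂ] H) (hApos : A.IsPositive)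
    (N : Seminorm ℂ (H →L[ℂ] H)) (h1 : SelfadjInv A N) (h2 : Submult A N)
    (T Ts S Ss W1 W2 : H →L[ℂ] H) (hTs : IsSharp A T Ts) (hSs : IsSharp A S Ss)
    (hW1 : IsSharp A (T ∘L S - S ∘L Ts) W1)
    (hW2 : IsSharp A (T ∘L S + S ∘L Ts) W2) :
    wNA N (T ∘L S + S ∘L Ts) W2 ≤ 2 * N T * wNA N S Ss ∧
      wNA N (T ∘L S - S ∘L Ts) W1 ≤ 2 * N T * wNA N S Ss := by
  constructor
  · simpa using wNA_comp_add_smul_comp_le hApos h1 h2 hTs hSs.isAAdjoint norm_one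
      (by simpa using hW2.isAAdjoint)
  · simpa [sub_eq_add_neg] using wNA_comp_add_smul_comp_le hApos h1 h2 hTs hSs.isAAdjoint
      (ε := -1) (by simp) (by simpa [sub_eq_add_neg] using hW1.isAAdjoint)

theorem stmt15 (A : H →L[ℂ] H) (hA : A ≠ 0) (hApos : A.IsPositive)
    (N : Seminorm ℂ (H →L[ℂ] H)) (h1 : SelfadjInv A N) (h2 : Submult A N)
    (T Ts S Ss W1 W2 : H →L[ℂ] H) (hTs : IsSharp A T Ts) (hSs : IsSharp A S Ss)
    (hW1 : IsSharp A (T ∘L S - S ∘L Ts) W1)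
    (hW2 : IsSharp A (T ∘L S + S ∘L Ts) W2) :
    wNA N (T ∘L S + S ∘L Ts) W2 ≤ 2 * N T * wNA N S Ss ∧
      wNA N (T ∘L S - S ∘L Ts) W1 ≤ 2 * N T * wNA N S Ss :=
  stmt15_general A hApos N h1 h2 T Ts S Ss W1 W2 hTs hSs hW1 hW2
end
end

section
/- If N_A is A-selfadjoint invariant and submultiplicative, then for T, S in B_A(H): ω_{N_A}(TS) ≤ 2 min{ ω_{N_A}(T)N_A(S), ω_{N_A}(S)N_A(T) } ≤ 4 ω_{N_A}(T) ω_{N_A}(S). -/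
noncomputable section

open ContinuousLinearMap

variable {H : Type*} [NormedAddCommGroup H] [InnerProductSpace ℂ H] [CompleteSpace H]

section AuxLemmas

variable {A : H →L[ℂ] H}

lemma posre (hApos : A.IsPositive) (w : H) : 0 ≤ ((inner ℂ (A w) w : ℂ)).re := by
  have := hApos.2 w
  simpa [ContinuousLinearMap.reApplyInnerSelf, RCLike.re_to_complex] using this

lemma cs_aux (hApos : A.IsPositive) (u v : H) :
    ‖(inner ℂ (A u) v : ℂ)‖ ≤
      Real.sqrt ((inner ℂ (A u) u : ℂ).re) * Real.sqrt ((inner ℂ (A v) v : ℂ).re) := by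
  set p : ℂ := inner ℂ (A u) v with hp
  set a : ℝ := ((inner ℂ (A u) u : ℂ)).re with ha
  set b : ℝ := ((inner ℂ (A v) v : ℂ)).re with hb
  have ha0 : 0 ≤ a := posre hApos u
  have hb0 : 0 ≤ b := posre hApos v
  have hconj : (inner ℂ (A v) u : ℂ) = (starRingEnd ℂ) p := by
    rw [hp, inner_conj_symm v (A u)]
    simpa using hApos.isSymmetric v u
  have hq : ∀ c : ℂ, 0 ≤ a + 2 * (c * p).re + Complex.normSq c * b := by
    intro c
    have h0 := posre hApos (u + c • v)
    have he : (inner ℂ (A (u + c • v)) (u + c • v) : ℂ)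
        = inner ℂ (A u) u + c * p + (starRingEnd ℂ) (c * p)
          + (Complex.normSq c : ℂ) * inner ℂ (A v) v := by
      simp only [map_add, map_smul, inner_add_left, inner_add_right, inner_smul_left,
        inner_smul_right, hconj, ← hp]
      rw [map_mul, Complex.normSq_eq_conj_mul_self]
      ring
    rw [he] at h0
    simp only [Complex.add_re, Complex.conj_re, Complex.re_ofReal_mul] at h0
    rw [← ha, ← hb] at h0
    linarith
  have hkey : ∀ t : ℝ, 0 ≤ a - 2 * t * Complex.normSq p + t ^ 2 * Complex.normSq p * b := by
    intro t
    have := hq (-(t : ℂ) * (starRingEnd ℂ) p)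
    have h1 : ((-(t : ℂ) * (starRingEnd ℂ) p) * p).re = -t * Complex.normSq p := by
      have hpe : (-(t : ℂ) * (starRingEnd ℂ) p) * p = ((-t * Complex.normSq p : ℝ) : ℂ) := by
        rw [mul_assoc, mul_comm ((starRingEnd ℂ) p) p, Complex.mul_conj]
        push_cast
        ring
      rw [hpe, Complex.ofReal_re]
    have h2 : Complex.normSq (-(t : ℂ) * (starRingEnd ℂ) p) = t ^ 2 * Complex.normSq p := by
      rw [Complex.normSq_mul, Complex.normSq_neg, Complex.normSq_conj, Complex.normSq_ofReal]
      ring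
    rw [h1, h2] at this
    linarith
  have hns : Complex.normSq p = ‖p‖ ^ 2 := by
    rw [Complex.sq_norm]
  have hmain : ‖p‖ ^ 2 ≤ a * b := by
    rcases eq_or_lt_of_le (norm_nonneg p) with hp0 | hp0
    · rw [← hp0]
      simpa using mul_nonneg ha0 hb0
    · have hm : 0 < Complex.normSq p := by rw [hns]; positivity
      rcases eq_or_lt_of_le hb0 with hb1 | hb1
      · exfalso
        have := hkey ((a + 1) / Complex.normSq p)
        rw [← hb1] at this
        have h3 : (a + 1) / Complex.normSq p * Complex.normSq p = a + 1 := by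
          field_simp
        nlinarith
      · have hb' : b ≠ 0 := ne_of_gt hb1
        have hthis := hkey (1 / b)
        have e1 : (1 / b) ^ 2 * Complex.normSq p * b = Complex.normSq p / b := by
          field_simp
        have e2 : 2 * (1 / b) * Complex.normSq p = 2 * (Complex.normSq p / b) := by
          ring
        rw [e1, e2] at hthis
        have h5 : Complex.normSq p / b ≤ a := by linarith
        have h6 : Complex.normSq p ≤ a * b := (div_le_iff₀ hb1).mp h5
        rw [← hns]
        exact h6
  calc ‖p‖ = Real.sqrt (‖p‖ ^ 2) := by rw [Real.sqrt_sq (norm_nonneg p)]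
    _ ≤ Real.sqrt (a * b) := Real.sqrt_le_sqrt hmain
    _ = Real.sqrt a * Real.sqrt b := Real.sqrt_mul ha0 _

lemma memBAhalf_of_sharp (hApos : A.IsPositive) {T Ts : H →L[ℂ] H}
    (h : IsSharp A T Ts) : MemBAhalf A T := by
  obtain ⟨heq, -⟩ := h
  have hAT : A ∘L T = adjoint Ts ∘L A := by
    have h0 := congrArg ContinuousLinearMap.adjoint heq
    rw [ContinuousLinearMap.adjoint_comp, ContinuousLinearMap.adjoint_comp,
      ContinuousLinearMap.adjoint_adjoint, hApos.isSelfAdjoint.adjoint_eq] at h0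
    exact h0.symm
  have hmove : ∀ u v : H, (inner ℂ (A (T u)) v : ℂ) = inner ℂ (A u) (Ts v) := by
    intro u v
    have h1 : A (T u) = adjoint Ts (A u) := by
      rw [← ContinuousLinearMap.comp_apply, hAT, ContinuousLinearMap.comp_apply]
    rw [h1, ContinuousLinearMap.adjoint_inner_left]
  have hmove2 : ∀ u v : H, (inner ℂ (A (Ts u)) v : ℂ) = inner ℂ (A u) (T v) := by
    intro u v
    have h1 : A (Ts u) = adjoint T (A u) := by
      rw [← ContinuousLinearMap.comp_apply, heq, ContinuousLinearMap.comp_apply]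
    rw [h1, ContinuousLinearMap.adjoint_inner_left]
  set R : H →L[ℂ] H := Ts ∘L T with hRdef
  have hR : ∀ u v : H, (inner ℂ (A (R u)) v : ℂ) = inner ℂ (A u) (R v) := by
    intro u v
    have h1 : R u = Ts (T u) := rfl
    have h2 : R v = Ts (T v) := rfl
    rw [h1, h2, hmove2, hmove]
  have hRpow : ∀ (k : ℕ) (u v : H), (inner ℂ (A ((R ^ k) u)) v : ℂ) = inner ℂ (A u) ((R ^ k) v) := by
    intro k
    induction k with
    | zero => intro u v; simp
    | succ k ih =>
      intro u v
      have h1 : (R ^ (k + 1)) u = (R ^ k) (R u) := by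
        rw [pow_succ, ContinuousLinearMap.mul_apply]
      have h2 : (R ^ (k + 1)) v = R ((R ^ k) v) := by
        rw [pow_succ', ContinuousLinearMap.mul_apply]
      rw [h1, h2, ih, hR]
  refine ⟨Real.sqrt (‖R‖ + 1), Real.sqrt_pos.mpr (by positivity), fun x => ?_⟩
  set M : ℝ := ‖R‖ + 1 with hM
  set K : ℝ := ‖A x‖ * ‖x‖ with hK
  set b : ℝ := aNorm A x with hb
  have hbnn : 0 ≤ b := Real.sqrt_nonneg _
  have hK0 : 0 ≤ K := by positivity
  have hM1 : 1 ≤ M := by rw [hM]; linarith [norm_nonneg R]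
  have hMpos : 0 < M := by linarith
  set e : ℕ → ℝ := fun n => ((inner ℂ (A x) ((R ^ (2 ^ n : ℕ)) x) : ℂ)).re with he
  have he_eq : ∀ n : ℕ, (inner ℂ (A x) ((R ^ (2 ^ (n + 1) : ℕ)) x) : ℂ)
      = inner ℂ (A ((R ^ (2 ^ n : ℕ)) x)) ((R ^ (2 ^ n : ℕ)) x) := by
    intro n
    have h2 : (2 : ℕ) ^ (n + 1) = 2 ^ n + 2 ^ n := by rw [pow_succ, mul_two]
    rw [h2, pow_add, ContinuousLinearMap.mul_apply, ← hRpow]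
  have he0 : ∀ n, 0 ≤ e n := by
    intro n
    cases n with
    | zero =>
      have h1 : (R ^ (2 ^ 0 : ℕ)) x = Ts (T x) := by
        norm_num
        rfl
      simp only [he, h1]
      rw [← hmove]
      exact posre hApos (T x)
    | succ n =>
      simp only [he]
      rw [he_eq n]
      exact posre hApos _
  have hstep : ∀ n, e n ≤ b * Real.sqrt (e (n + 1)) := by
    intro n
    have h1 : e n ≤ ‖(inner ℂ (A x) ((R ^ (2 ^ n : ℕ)) x) : ℂ)‖ := by
      exact Complex.re_le_norm _
    have h2 := cs_aux hApos x ((R ^ (2 ^ n : ℕ)) x)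
    have h3 : ((inner ℂ (A ((R ^ (2 ^ n : ℕ)) x)) ((R ^ (2 ^ n : ℕ)) x) : ℂ)).re = e (n + 1) := by
      rw [← he_eq n]
    rw [h3] at h2
    calc e n ≤ ‖(inner ℂ (A x) ((R ^ (2 ^ n : ℕ)) x) : ℂ)‖ := h1
      _ ≤ Real.sqrt ((inner ℂ (A x) x : ℂ).re) * Real.sqrt (e (n + 1)) := h2
      _ = b * Real.sqrt (e (n + 1)) := by rw [hb]; rfl
  have hP : ∀ n : ℕ, (e 0) ^ (2 ^ n : ℕ) ≤ b ^ (2 ^ (n + 1) - 2 : ℕ) * e n := by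
    intro n
    induction n with
    | zero => simpa using le_refl (e 0)
    | succ n ih =>
      have h2 : (2 : ℕ) ≤ 2 ^ (n + 1) := by
        calc (2 : ℕ) = 2 ^ 1 := rfl
          _ ≤ 2 ^ (n + 1) := Nat.pow_le_pow_right (by norm_num) (by omega)
      have hsq : (e n) ^ 2 ≤ b ^ 2 * e (n + 1) := by
        have h4 := mul_self_le_mul_self (he0 n) (hstep n)
        have h5 := Real.sq_sqrt (he0 (n + 1))
        nlinarith [Real.sqrt_nonneg (e (n + 1))]
      have hexp1 : (2 : ℕ) ^ (n + 2) = 2 ^ (n + 1) * 2 := pow_succ 2 (n + 1)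
      calc (e 0) ^ (2 ^ (n + 1) : ℕ) = ((e 0) ^ (2 ^ n : ℕ)) ^ 2 := by
            rw [← pow_mul, pow_succ]
        _ ≤ (b ^ (2 ^ (n + 1) - 2 : ℕ) * e n) ^ 2 := by
            apply pow_le_pow_left₀ (pow_nonneg (he0 0) _) ih
        _ = (b ^ (2 ^ (n + 1) - 2 : ℕ)) ^ 2 * (e n) ^ 2 := by rw [mul_pow]
        _ ≤ (b ^ (2 ^ (n + 1) - 2 : ℕ)) ^ 2 * (b ^ 2 * e (n + 1)) := by
            apply mul_le_mul_of_nonneg_left hsq (by positivity)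
        _ = b ^ ((2 ^ (n + 1) - 2) * 2 + 2 : ℕ) * e (n + 1) := by
            rw [pow_add, ← pow_mul]; ring
        _ = b ^ (2 ^ (n + 2) - 2 : ℕ) * e (n + 1) := by
            congr 2
            omega
  have hKbound : ∀ n : ℕ, e n ≤ K * M ^ (2 ^ n : ℕ) := by
    intro n
    have h1 : e n ≤ ‖(inner ℂ (A x) ((R ^ (2 ^ n : ℕ)) x) : ℂ)‖ := by
      exact Complex.re_le_norm _
    have h2 : ‖(inner ℂ (A x) ((R ^ (2 ^ n : ℕ)) x) : ℂ)‖ ≤ ‖A x‖ * ‖(R ^ (2 ^ n : ℕ)) x‖ :=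
      norm_inner_le_norm _ _
    have h3 : ‖(R ^ (2 ^ n : ℕ)) x‖ ≤ ‖R ^ (2 ^ n : ℕ)‖ * ‖x‖ :=
      ContinuousLinearMap.le_opNorm _ x
    have h4 : ‖R ^ (2 ^ n : ℕ)‖ ≤ ‖R‖ ^ (2 ^ n : ℕ) :=
      norm_pow_le' R (pow_pos (by norm_num) n)
    have h5 : ‖R‖ ^ (2 ^ n : ℕ) ≤ M ^ (2 ^ n : ℕ) :=
      pow_le_pow_left₀ (norm_nonneg R) (by rw [hM]; linarith) _
    calc e n ≤ ‖A x‖ * ‖(R ^ (2 ^ n : ℕ)) x‖ := le_trans h1 h2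
      _ ≤ ‖A x‖ * (‖R ^ (2 ^ n : ℕ)‖ * ‖x‖) :=
          mul_le_mul_of_nonneg_left h3 (norm_nonneg _)
      _ ≤ ‖A x‖ * (M ^ (2 ^ n : ℕ) * ‖x‖) := by
          have := mul_le_mul_of_nonneg_right (le_trans h4 h5) (norm_nonneg x)
          exact mul_le_mul_of_nonneg_left this (norm_nonneg _)
      _ = K * M ^ (2 ^ n : ℕ) := by rw [hK]; ring
  have hgoal : e 0 ≤ M * b ^ 2 := by
    rcases eq_or_lt_of_le hbnn with hb0 | hb0
    · have h1 := hstep 0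
      rw [← hb0] at h1
      simp only [zero_mul] at h1
      have : M * b ^ 2 = 0 := by rw [← hb0]; ring
      linarith
    · by_contra hlt
      push_neg at hlt
      set t : ℝ := e 0 / (M * b ^ 2) with ht
      have ht1 : 1 < t := (one_lt_div (by positivity)).mpr hlt
      obtain ⟨n, hn⟩ := pow_unbounded_of_one_lt (K / b ^ 2) ht1
      have hle : t ^ n ≤ t ^ (2 ^ n : ℕ) :=
        pow_le_pow_right₀ ht1.le (Nat.le_of_lt (Nat.lt_two_pow_self (n := n)))
      have hfin : t ^ (2 ^ n : ℕ) ≤ K / b ^ 2 := by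
        rw [ht, div_pow, div_le_div_iff₀ (by positivity) (by positivity)]
        have h2n : (2 : ℕ) ≤ 2 ^ (n + 1) := by
          calc (2 : ℕ) = 2 ^ 1 := rfl
            _ ≤ 2 ^ (n + 1) := Nat.pow_le_pow_right (by norm_num) (by omega)
        have hexp : (M * b ^ 2) ^ (2 ^ n : ℕ) = M ^ (2 ^ n : ℕ) * b ^ (2 ^ (n + 1) : ℕ) := by
          rw [mul_pow, ← pow_mul]
          congr 2
          rw [pow_succ]
          ring
        have hsplit : b ^ (2 ^ (n + 1) : ℕ) = b ^ (2 ^ (n + 1) - 2 : ℕ) * b ^ 2 := by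
          rw [← pow_add]
          congr 1
          omega
        have h1 := hP n
        have h2 := hKbound n
        have h6 : (0:ℝ) ≤ b ^ (2 ^ (n + 1) - 2 : ℕ) := by positivity
        calc (e 0) ^ (2 ^ n : ℕ) * b ^ 2 ≤ (b ^ (2 ^ (n + 1) - 2 : ℕ) * e n) * b ^ 2 := by
              apply mul_le_mul_of_nonneg_right h1 (by positivity)
          _ ≤ (b ^ (2 ^ (n + 1) - 2 : ℕ) * (K * M ^ (2 ^ n : ℕ))) * b ^ 2 := by
              apply mul_le_mul_of_nonneg_right (mul_le_mul_of_nonneg_left h2 h6) (by positivity)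
          _ = K * (M * b ^ 2) ^ (2 ^ n : ℕ) := by rw [hexp, hsplit]; ring
      linarith
  have hTx : aNorm A (T x) = Real.sqrt (e 0) := by
    rw [aNorm]
    congr 1
    simp only [he]
    rw [hmove]
    rfl
  rw [hTx, hb]
  calc Real.sqrt (e 0) ≤ Real.sqrt (M * (aNorm A x) ^ 2) := Real.sqrt_le_sqrt (by
        rw [← hb]; exact hgoal)
    _ = Real.sqrt M * aNorm A x := by
        rw [Real.sqrt_mul hMpos.le, Real.sqrt_sq (by rw [← hb]; exact hbnn)]
    _ = Real.sqrt (‖R‖ + 1) * aNorm A x := by rw [hM]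

lemma term_norm_le (N : Seminorm ℂ (H →L[ℂ] H)) {T Ts : H →L[ℂ] H} (hN : N Ts = N T) (θ : ℝ) :
    N (ReA (Complex.exp ((θ : ℂ) * Complex.I) • T)
      (Complex.exp (-((θ : ℂ) * Complex.I)) • Ts)) ≤ N T := by
  have h1 : ‖Complex.exp ((θ : ℂ) * Complex.I)‖ = 1 := by
    rw [Complex.norm_exp]
    simp
  have h2 : ‖Complex.exp (-((θ : ℂ) * Complex.I))‖ = 1 := by
    rw [Complex.norm_exp]
    simp
  rw [ReA, map_smul_eq_mul]
  have h3 : ‖(2 : ℂ)⁻¹‖ = 2⁻¹ := by norm_num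
  have h4 : N (Complex.exp ((θ : ℂ) * Complex.I) • T
      + Complex.exp (-((θ : ℂ) * Complex.I)) • Ts) ≤ N T + N T := by
    refine le_trans (map_add_le_add N _ _) ?_
    rw [map_smul_eq_mul, map_smul_eq_mul, h1, h2, hN]
    simp
  rw [h3]
  linarith

lemma wNA_bdd (N : Seminorm ℂ (H →L[ℂ] H)) {T Ts : H →L[ℂ] H} (hN : N Ts = N T) :
    BddAbove (Set.range fun θ : ℝ => N (ReA (Complex.exp ((θ : ℂ) * Complex.I) • T)
      (Complex.exp (-((θ : ℂ) * Complex.I)) • Ts))) := by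
  refine ⟨N T, ?_⟩
  rintro r ⟨θ, rfl⟩
  exact term_norm_le N hN θ

lemma wNA_nonneg (N : Seminorm ℂ (H →L[ℂ] H)) (T Ts : H →L[ℂ] H) : 0 ≤ wNA N T Ts :=
  Real.iSup_nonneg fun _ => apply_nonneg N _

lemma wNA_le (N : Seminorm ℂ (H →L[ℂ] H)) {T Ts : H →L[ℂ] H} (hN : N Ts = N T) :
    wNA N T Ts ≤ N T := by
  unfold wNA
  exact ciSup_le (term_norm_le N hN)

lemma le_two_wNA (N : Seminorm ℂ (H →L[ℂ] H)) {T Ts : H →L[ℂ] H} (hN : N Ts = N T) :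
    N T ≤ 2 * wNA N T Ts := by
  have hbdd := wNA_bdd N hN
  have hI : ((2 : ℂ) * Complex.I)⁻¹ = -Complex.I / 2 := by
    apply inv_eq_of_mul_eq_one_right
    have := Complex.I_mul_I
    field_simp
    linear_combination (-1 : ℂ) * Complex.I_mul_I
  have hII : Complex.I * (-Complex.I / 2) = 1 / 2 := by
    linear_combination (-1 / 2 : ℂ) * Complex.I_mul_I
  have h0 : N (ReA T Ts) ≤ wNA N T Ts := by
    have h := le_ciSup hbdd (0 : ℝ)
    simpa [wNA] using h
  have hpi : N (ImA T Ts) ≤ wNA N T Ts := by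
    have h := le_ciSup hbdd (-(Real.pi / 2))
    have hexp : Complex.exp (((-(Real.pi / 2) : ℝ) : ℂ) * Complex.I) = -Complex.I := by
      rw [Complex.exp_mul_I, ← Complex.ofReal_cos, ← Complex.ofReal_sin]
      norm_num [Real.cos_pi_div_two, Real.sin_pi_div_two]
    have hexp2 : Complex.exp (-(((-(Real.pi / 2) : ℝ) : ℂ) * Complex.I)) = Complex.I := by
      have heq : -(((-(Real.pi / 2) : ℝ) : ℂ) * Complex.I) = ((Real.pi / 2 : ℝ) : ℂ) * Complex.I := by
        push_cast
        ring
      rw [heq, Complex.exp_mul_I, ← Complex.ofReal_cos, ← Complex.ofReal_sin]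
      norm_num [Real.cos_pi_div_two, Real.sin_pi_div_two]
    rw [hexp, hexp2] at h
    refine le_trans (le_of_eq ?_) h
    congr 1
    rw [ImA, ReA, hI]
    module
  have hT_eq : T = ReA T Ts + Complex.I • ImA T Ts := by
    rw [ReA, ImA, hI, smul_smul, hII]
    module
  calc N T = N (ReA T Ts + Complex.I • ImA T Ts) := by rw [← hT_eq]
    _ ≤ N (ReA T Ts) + N (Complex.I • ImA T Ts) := map_add_le_add N _ _
    _ = N (ReA T Ts) + N (ImA T Ts) := by
        rw [map_smul_eq_mul, Complex.norm_I, one_mul]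
    _ ≤ 2 * wNA N T Ts := by linarith

end AuxLemmas

theorem stmt16 (A : H →L[ℂ] H) (hA : A ≠ 0) (hApos : A.IsPositive)
    (N : Seminorm ℂ (H →L[ℂ] H)) (h1 : SelfadjInv A N) (h2 : Submult A N)
    (T Ts S Ss : H →L[ℂ] H) (hTs : IsSharp A T Ts) (hSs : IsSharp A S Ss) :
    wNA N (T ∘L S) (Ss ∘L Ts) ≤
        2 * min (wNA N T Ts * N S) (wNA N S Ss * N T) ∧
      2 * min (wNA N T Ts * N S) (wNA N S Ss * N T) ≤
        4 * wNA N T Ts * wNA N S Ss := by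
  have hTS : IsSharp A (T ∘L S) (Ss ∘L Ts) := by
    constructor
    · have e1 := ContinuousLinearMap.ext_iff.mp hSs.1
      have e2 := ContinuousLinearMap.ext_iff.mp hTs.1
      ext x
      simp only [ContinuousLinearMap.comp_apply, ContinuousLinearMap.adjoint_comp]
      rw [show A (Ss (Ts x)) = adjoint S (A (Ts x)) from by
            simpa [ContinuousLinearMap.comp_apply] using e1 (Ts x),
          show A (Ts x) = adjoint T (A x) from by
            simpa [ContinuousLinearMap.comp_apply] using e2 x]
    · intro x
      exact hSs.2 _
  have hN_TS : N (Ss ∘L Ts) = N (T ∘L S) := (h1 _ _ hTS).symm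
  have hN_T : N Ts = N T := (h1 T Ts hTs).symm
  have hN_S : N Ss = N S := (h1 S Ss hSs).symm
  have hmT := memBAhalf_of_sharp hApos hTs
  have hmS := memBAhalf_of_sharp hApos hSs
  have hNTS_le : N (T ∘L S) ≤ N T * N S := h2 T S hmT hmS
  have hw_le : wNA N (T ∘L S) (Ss ∘L Ts) ≤ N (T ∘L S) := wNA_le N hN_TS
  have hT2 : N T ≤ 2 * wNA N T Ts := le_two_wNA N hN_T
  have hS2 : N S ≤ 2 * wNA N S Ss := le_two_wNA N hN_S
  have hwT0 : 0 ≤ wNA N T Ts := wNA_nonneg N T Ts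
  have hwS0 : 0 ≤ wNA N S Ss := wNA_nonneg N S Ss
  have hNT0 : (0:ℝ) ≤ N T := apply_nonneg N T
  have hNS0 : (0:ℝ) ≤ N S := apply_nonneg N S
  have b1 : wNA N (T ∘L S) (Ss ∘L Ts) ≤ 2 * (wNA N T Ts * N S) := by
    have : N T * N S ≤ (2 * wNA N T Ts) * N S := mul_le_mul_of_nonneg_right hT2 hNS0
    calc wNA N (T ∘L S) (Ss ∘L Ts) ≤ N T * N S := le_trans hw_le hNTS_le
      _ ≤ (2 * wNA N T Ts) * N S := this
      _ = 2 * (wNA N T Ts * N S) := by ring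
  have b2 : wNA N (T ∘L S) (Ss ∘L Ts) ≤ 2 * (wNA N S Ss * N T) := by
    have : N S * N T ≤ (2 * wNA N S Ss) * N T := mul_le_mul_of_nonneg_right hS2 hNT0
    calc wNA N (T ∘L S) (Ss ∘L Ts) ≤ N T * N S := le_trans hw_le hNTS_le
      _ = N S * N T := by ring
      _ ≤ (2 * wNA N S Ss) * N T := this
      _ = 2 * (wNA N S Ss * N T) := by ring
  constructor
  · rcases le_total (wNA N T Ts * N S) (wNA N S Ss * N T) with h | h
    · rw [min_eq_left h]; exact b1
    · rw [min_eq_right h]; exact b2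
  · rcases le_total (wNA N T Ts * N S) (wNA N S Ss * N T) with h | h
    · rw [min_eq_left h]
      nlinarith
    · rw [min_eq_right h]
      nlinarith
end
end
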